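/- arXiv:math/0510038 — 13 statements merged into one kernel-verified Lean document; each statement's English description precedes it below -/
import Mathlib

section
/- For every integer n ≥ 1 the pointwise identity f'[n] · (f[n−1]∘S^n) = f'[n−1] · (f[n]∘S^n) holds on E. -/
open Function

private noncomputable def contD {E : Type*} (T : E → E) (B : E → ℝ) (g : ℕ → E → ℝ) : ℕ → E → ℝ
  | 0 => fun _ => 1
  | 1 => fun _ => 1
  | n + 2 => fun e => contD T B g (n + 1) (T e) * (1 - B e * g n (T e))

section Generic

variable {E : Type*} (T : E → E) (A B : E → ℝ) (g : ℕ → E → ℝ)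

lemma contD_zero (e : E) : contD T B g 0 e = 1 := rfl

lemma contD_one (e : E) : contD T B g 1 e = 1 := rfl

lemma contD_ss (n : ℕ) (e : E) :
    contD T B g (n + 2) e = contD T B g (n + 1) (T e) * (1 - B e * g n (T e)) := rfl

variable (hA : ∀ e, 0 < A e) (hB : ∀ e, 0 < B e) (hAB : ∀ e, A e + B e < 1)
variable (hg0 : ∀ e, g 0 e = A e) (hgs : ∀ n e, g (n + 1) e = A e / (1 - B e * g n (T e)))

include hA hB hAB hg0 hgs

lemma g_bounds : ∀ n e, 0 < g n e ∧ g n e < 1 := by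
  intro n
  induction n with
  | zero =>
    intro e
    rw [hg0]
    exact ⟨hA e, by have := hAB e; have := hB e; linarith⟩
  | succ k ih =>
    intro e
    obtain ⟨h0, h1⟩ := ih (T e)
    have hden : A e < 1 - B e * g k (T e) := by nlinarith [hA e, hB e, hAB e]
    have hdpos : 0 < 1 - B e * g k (T e) := lt_trans (hA e) hden
    rw [hgs]
    exact ⟨div_pos (hA e) hdpos, (div_lt_one hdpos).2 hden⟩

lemma den_pos : ∀ n e, 0 < 1 - B e * g n (T e) := by
  intro n e
  obtain ⟨h0, h1⟩ := g_bounds T A B g hA hB hAB hg0 hgs n (T e)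
  nlinarith [hA e, hB e, hAB e]

lemma contD_pos : ∀ n e, 0 < contD T B g n e := by
  have key : ∀ n, (∀ e, 0 < contD T B g n e) ∧ (∀ e, 0 < contD T B g (n + 1) e) := by
    intro n
    induction n with
    | zero => exact ⟨fun e => by rw [contD_zero]; norm_num, fun e => by rw [contD_one]; norm_num⟩
    | succ k ih =>
      refine ⟨ih.2, fun e => ?_⟩
      rw [contD_ss]
      exact mul_pos (ih.2 (T e)) (den_pos T A B g hA hB hAB hg0 hgs k e)
  exact fun n => (key n).1

lemma gD : ∀ n e, g n e * contD T B g (n + 1) e = A e * contD T B g n (T e) := by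
  intro n e
  cases n with
  | zero => rw [contD_one, contD_zero, hg0]
  | succ k =>
    have hd : (1 - B e * g k (T e)) ≠ 0 := ne_of_gt (den_pos T A B g hA hB hAB hg0 hgs k e)
    rw [hgs, contD_ss]
    field_simp

lemma contD_rec2 : ∀ n e, contD T B g (n + 2) e
    = contD T B g (n + 1) (T e) - B e * A (T e) * contD T B g n (T (T e)) := by
  intro n e
  have h := gD T A B g hA hB hAB hg0 hgs n (T e)
  rw [contD_ss]
  linear_combination (-(B e)) * h

lemma contD_rev : ∀ n e, contD T B g (n + 2) e
    = contD T B g (n + 1) e - A (T^[n + 1] e) * B (T^[n] e) * contD T B g n e := by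
  have key : ∀ n, (∀ e, contD T B g (n + 2) e
      = contD T B g (n + 1) e - A (T^[n + 1] e) * B (T^[n] e) * contD T B g n e) ∧
      (∀ e, contD T B g (n + 3) e
      = contD T B g (n + 2) e - A (T^[n + 2] e) * B (T^[n + 1] e) * contD T B g (n + 1) e) := by
    intro n
    induction n with
    | zero =>
      constructor
      · intro e
        simp only [zero_add, Function.iterate_one, Function.iterate_zero, id_eq]
        rw [show contD T B g 2 e = contD T B g 1 (T e) * (1 - B e * g 0 (T e)) from rfl,
          contD_one, contD_one, contD_zero, hg0]
        ring
      · intro e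
        simp only [zero_add]
        rw [contD_rec2 T A B g hA hB hAB hg0 hgs 1 e]
        rw [show contD T B g 2 (T e) = contD T B g 1 (T (T e)) * (1 - B (T e) * g 0 (T (T e)))
          from rfl,
          show contD T B g 2 e = contD T B g 1 (T e) * (1 - B e * g 0 (T e)) from rfl]
        simp only [contD_one, contD_zero, hg0,
          show T^[2] e = T (T e) by rw [Function.iterate_succ_apply', Function.iterate_one],
          Function.iterate_one]
        ring
    | succ k ih =>
      refine ⟨ih.2, fun e => ?_⟩
      have h1 := contD_rec2 T A B g hA hB hAB hg0 hgs (k + 2) e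
      have h2 := ih.2 (T e)
      have h3 := (ih.1) (T (T e))
      have h4 := contD_rec2 T A B g hA hB hAB hg0 hgs (k + 1) e
      have h5 := contD_rec2 T A B g hA hB hAB hg0 hgs k e
      have e1 : T^[k + 2] (T e) = T^[k + 3] e := (Function.iterate_succ_apply T (k + 2) e).symm
      have e2 : T^[k + 1] (T e) = T^[k + 2] e := (Function.iterate_succ_apply T (k + 1) e).symm
      have e3 : T^[k + 1] (T (T e)) = T^[k + 3] e := by
        rw [← Function.iterate_succ_apply T (k + 1) (T e),
          ← Function.iterate_succ_apply T (k + 2) e]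
      have e4 : T^[k] (T (T e)) = T^[k + 2] e := by
        rw [← Function.iterate_succ_apply T k (T e), ← Function.iterate_succ_apply T (k + 1) e]
      rw [e1, e2] at h2
      rw [e3, e4] at h3
      rw [h1, h2, h3, h4, h5]
      ring
  exact fun n => (key n).1

end Generic

theorem stmt_1 {E : Type*} (S : E ≃ E) (p : E → ℝ)
    (hp0 : ∀ e, 0 < p e) (hp1 : ∀ e, p e < 1)
    (u : ℝ) (hu0 : 0 < u) (hu1 : u < 1)
    (f f' : ℕ → E → ℝ)
    (hf0 : ∀ e, f 0 e = u * p e)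
    (hfs : ∀ n e, f (n + 1) e = u * p e / (1 - u * (1 - p e) * f n (S.symm e)))
    (hf'0 : ∀ e, f' 0 e = u * (1 - p e))
    (hf's : ∀ n e, f' (n + 1) e = u * (1 - p e) / (1 - u * p e * f' n (S e))) :
    ∀ n : ℕ, 1 ≤ n → ∀ e : E,
      f' n e * f (n - 1) ((⇑S)^[n] e) = f' (n - 1) e * f n ((⇑S)^[n] e) := by
  have hA : ∀ e, 0 < u * p e := fun e => mul_pos hu0 (hp0 e)
  have hB : ∀ e, 0 < u * (1 - p e) := fun e => mul_pos hu0 (by linarith [hp1 e])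
  have hAB : ∀ e, u * p e + u * (1 - p e) < 1 := fun e => by nlinarith
  have hAB' : ∀ e, u * (1 - p e) + u * p e < 1 := fun e => by nlinarith
  set Df : ℕ → E → ℝ := contD (⇑S.symm) (fun e => u * (1 - p e)) f with hDf
  set Df' : ℕ → E → ℝ := contD (⇑S) (fun e => u * p e) f' with hDf'
  have hDpos : ∀ n e, 0 < Df n e :=
    contD_pos (⇑S.symm) (fun e => u * p e) (fun e => u * (1 - p e)) f hA hB hAB hf0 hfs
  have hD'pos : ∀ n e, 0 < Df' n e :=
    contD_pos (⇑S) (fun e => u * (1 - p e)) (fun e => u * p e) f' hB hA hAB' hf'0 hf's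
  have hgDf : ∀ n e, f n e * Df (n + 1) e = u * p e * Df n (S.symm e) :=
    gD (⇑S.symm) (fun e => u * p e) (fun e => u * (1 - p e)) f hA hB hAB hf0 hfs
  have hgDf' : ∀ n e, f' n e * Df' (n + 1) e = u * (1 - p e) * Df' n (S e) :=
    gD (⇑S) (fun e => u * (1 - p e)) (fun e => u * p e) f' hB hA hAB' hf'0 hf's
  have hrec2' : ∀ n e, Df' (n + 2) e
      = Df' (n + 1) (S e) - u * p e * (u * (1 - p (S e))) * Df' n (S (S e)) :=
    contD_rec2 (⇑S) (fun e => u * (1 - p e)) (fun e => u * p e) f' hB hA hAB' hf'0 hf's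
  have hrev : ∀ n e, Df (n + 2) e
      = Df (n + 1) e - u * p ((⇑S.symm)^[n + 1] e) * (u * (1 - p ((⇑S.symm)^[n] e))) * Df n e :=
    contD_rev (⇑S.symm) (fun e => u * p e) (fun e => u * (1 - p e)) f hA hB hAB hf0 hfs
  have hsi : ∀ (k : ℕ) (x : E), (⇑S.symm)^[k] ((⇑S)^[k] x) = x := fun k => S.left_inv.iterate k
  have hG6 : ∀ n, (∀ e, Df' (n + 1) e = Df (n + 1) ((⇑S)^[n] e)) ∧
      (∀ e, Df' (n + 2) e = Df (n + 2) ((⇑S)^[n + 1] e)) := by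
    intro n
    induction n with
    | zero =>
      constructor
      · intro e
        rfl
      · intro e
        simp only [zero_add, Function.iterate_one]
        rw [show Df' 2 e = Df' 1 (S e) * (1 - u * p e * f' 0 (S e)) from rfl,
          show Df 2 (S e) = Df 1 (S.symm (S e)) * (1 - u * (1 - p (S e)) * f 0 (S.symm (S e)))
            from rfl, show Df' 1 (S e) = 1 from rfl, show Df 1 (S.symm (S e)) = 1 from rfl,
          hf0, hf'0, Equiv.symm_apply_apply]
        ring
    | succ k ih =>
      refine ⟨ih.2, fun e => ?_⟩
      have h1 := hrec2' (k + 1) e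
      have h2 := ih.2 (S e)
      have h3 := ih.1 (S (S e))
      have e1 : (⇑S)^[k + 1] (S e) = (⇑S)^[k + 2] e :=
        (Function.iterate_succ_apply (⇑S) (k + 1) e).symm
      have e2 : (⇑S)^[k] (S (S e)) = (⇑S)^[k + 2] e := by
        rw [← Function.iterate_succ_apply (⇑S) k (S e),
          ← Function.iterate_succ_apply (⇑S) (k + 1) e]
      rw [e1] at h2
      rw [e2] at h3
      have h4 := hrev (k + 1) ((⇑S)^[k + 2] e)
      have e3 : (⇑S.symm)^[k + 2] ((⇑S)^[k + 2] e) = e := hsi (k + 2) e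
      have e4 : (⇑S.symm)^[k + 1] ((⇑S)^[k + 2] e) = S e := by
        rw [Function.iterate_succ_apply (⇑S) (k + 1) e]
        exact hsi (k + 1) (S e)
      rw [e3, e4] at h4
      rw [h1, h2, h3, h4]
  have hG6c : ∀ n e, Df' n (S e) = Df n ((⇑S)^[n] e) := by
    intro n e
    cases n with
    | zero => rfl
    | succ m =>
      rw [(hG6 m).1 (S e), ← Function.iterate_succ_apply (⇑S) m e]
  rintro n hn e
  obtain ⟨m, rfl⟩ : ∃ m, n = m + 1 := ⟨n - 1, (Nat.succ_pred_eq_of_pos hn).symm⟩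
  simp only [Nat.add_sub_cancel]
  set x : E := (⇑S)^[m + 1] e with hx
  have hsymmx : S.symm x = (⇑S)^[m] e := by
    rw [hx, Function.iterate_succ_apply' (⇑S) m e, Equiv.symm_apply_apply]
  have n1 : Df (m + 2) x ≠ 0 := ne_of_gt (hDpos (m + 2) x)
  have n2 : Df (m + 1) x ≠ 0 := ne_of_gt (hDpos (m + 1) x)
  have n3 : Df (m + 1) ((⇑S)^[m] e) ≠ 0 := ne_of_gt (hDpos (m + 1) ((⇑S)^[m] e))
  have e1 : f' (m + 1) e = u * (1 - p e) * Df (m + 1) x / Df (m + 2) x := by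
    rw [eq_div_iff n1]
    have h := hgDf' (m + 1) e
    rw [(hG6 (m + 1)).1 e] at h
    rw [hG6c (m + 1) e] at h
    rw [← hx] at h
    exact h
  have e2 : f m x = u * p x * Df m ((⇑S)^[m] e) / Df (m + 1) x := by
    rw [eq_div_iff n2]
    have h := hgDf m x
    rw [hsymmx] at h
    exact h
  have e3 : f' m e = u * (1 - p e) * Df m ((⇑S)^[m] e) / Df (m + 1) ((⇑S)^[m] e) := by
    rw [eq_div_iff n3]
    have h := hgDf' m e
    rw [(hG6 m).1 e, hG6c m e] at h
    exact h
  have e4 : f (m + 1) x = u * p x * Df (m + 1) ((⇑S)^[m] e) / Df (m + 2) x := by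
    rw [eq_div_iff n1]
    have h := hgDf (m + 1) x
    rw [hsymmx] at h
    exact h
  rw [e1, e2, e3, e4, div_mul_div_comm, div_mul_div_comm,
    div_eq_div_iff (mul_ne_zero n1 n2) (mul_ne_zero n3 n1)]
  ring
end

section
/- If log p and log q are m-integrable, then for every integer n ≥ 0 the functions log f[n] and log f'[n] are m-integrable. -/
open MeasureTheory

lemma aux_int_log {E : Type*} [MeasurableSpace E] (m : Measure E)
    (h g : E → ℝ) (hm : Measurable h)
    (hg : Integrable (fun e => Real.log (g e)) m)
    (hb : ∀ e, 0 < g e) (hle : ∀ e, g e ≤ h e) (hlt : ∀ e, h e ≤ 1) :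
    Integrable (fun e => Real.log (h e)) m := by
  refine Integrable.mono hg.abs
    ((Real.measurable_log.comp hm).aestronglyMeasurable) (Filter.Eventually.of_forall ?_)
  intro e
  have h0 : 0 < h e := lt_of_lt_of_le (hb e) (hle e)
  have hlog1 : Real.log (g e) ≤ Real.log (h e) := Real.log_le_log (hb e) (hle e)
  have hlog2 : Real.log (h e) ≤ 0 := Real.log_nonpos (le_of_lt h0) (hlt e)
  simp only [Real.norm_eq_abs, abs_abs]
  rw [abs_of_nonpos hlog2]
  have : -Real.log (h e) ≤ -Real.log (g e) := by linarith
  exact this.trans (neg_le_abs _)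

theorem stmt_2 {E : Type*} [MeasurableSpace E] (m : Measure E)
    [IsProbabilityMeasure m]
    (S : E ≃ E) (hS : MeasurePreserving S m m) (hSsymm : Measurable ⇑S.symm)
    (p : E → ℝ) (hpm : Measurable p)
    (hp0 : ∀ e, 0 < p e) (hp1 : ∀ e, p e < 1)
    (u : ℝ) (hu0 : 0 < u) (hu1 : u < 1)
    (f f' : ℕ → E → ℝ)
    (hf0 : ∀ e, f 0 e = u * p e)
    (hfs : ∀ n e, f (n + 1) e = u * p e / (1 - u * (1 - p e) * f n (S.symm e)))
    (hf'0 : ∀ e, f' 0 e = u * (1 - p e))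
    (hf's : ∀ n e, f' (n + 1) e = u * (1 - p e) / (1 - u * p e * f' n (S e)))
    (hlogp : Integrable (fun e => Real.log (p e)) m)
    (hlogq : Integrable (fun e => Real.log (1 - p e)) m) :
    ∀ n : ℕ, Integrable (fun e => Real.log (f n e)) m ∧
      Integrable (fun e => Real.log (f' n e)) m := by
  -- key structural lemma by induction
  have key : ∀ n : ℕ,
      (Measurable (f n) ∧ ∀ e, u * p e ≤ f n e ∧ f n e < 1) ∧
      (Measurable (f' n) ∧ ∀ e, u * (1 - p e) ≤ f' n e ∧ f' n e < 1) := by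
    intro n
    induction n with
    | zero =>
      constructor
      · constructor
        · have : f 0 = fun e => u * p e := funext hf0
          rw [this]; exact measurable_const.mul hpm
        · intro e
          rw [hf0 e]
          constructor
          · exact le_refl _
          · nlinarith [hp0 e, hp1 e]
      · constructor
        · have : f' 0 = fun e => u * (1 - p e) := funext hf'0
          rw [this]; exact measurable_const.mul (measurable_const.sub hpm)
        · intro e
          rw [hf'0 e]
          constructor
          · exact le_refl _
          · nlinarith [hp0 e, hp1 e]
    | succ n ih =>
      obtain ⟨⟨hfm, hfb⟩, ⟨hf'm, hf'b⟩⟩ := ih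
      constructor
      · constructor
        · have : f (n+1) = fun e => u * p e / (1 - u * (1 - p e) * f n (S.symm e)) :=
            funext (hfs n)
          rw [this]
          exact (measurable_const.mul hpm).div
            (measurable_const.sub ((measurable_const.mul
              (measurable_const.sub hpm)).mul (hfm.comp hSsymm)))
        · intro e
          rw [hfs n e]
          set x := f n (S.symm e) with hx
          have hx0 : 0 < x := lt_of_lt_of_le
            (mul_pos hu0 (hp0 (S.symm e))) (hfb (S.symm e)).1
          have hx1 : x < 1 := (hfb (S.symm e)).2
          have hq0 : 0 < 1 - p e := by linarith [hp1 e]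
          have hd1 : u * p e < 1 - u * (1 - p e) * x := by
            nlinarith [hp0 e, hp1 e,
              mul_lt_mul_of_pos_left hx1 (mul_pos hu0 hq0)]
          have hd2 : 1 - u * (1 - p e) * x ≤ 1 := by
            nlinarith [mul_pos (mul_pos hu0 hq0) hx0]
          have hd0 : 0 < 1 - u * (1 - p e) * x := by
            nlinarith [mul_pos hu0 (hp0 e)]
          constructor
          · calc u * p e = u * p e / 1 := by ring
              _ ≤ u * p e / (1 - u * (1 - p e) * x) := by
                  apply div_le_div_of_nonneg_left (le_of_lt (mul_pos hu0 (hp0 e))) hd0 hd2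
          · rw [div_lt_one hd0]; exact hd1
      · constructor
        · have : f' (n+1) = fun e => u * (1 - p e) / (1 - u * p e * f' n (S e)) :=
            funext (hf's n)
          rw [this]
          exact (measurable_const.mul (measurable_const.sub hpm)).div
            (measurable_const.sub ((measurable_const.mul hpm).mul
              (hf'm.comp hS.measurable)))
        · intro e
          rw [hf's n e]
          set x := f' n (S e) with hx
          have hq0' : 0 < 1 - p (S e) := by linarith [hp1 (S e)]
          have hx0 : 0 < x := lt_of_lt_of_le (mul_pos hu0 hq0') (hf'b (S e)).1
          have hx1 : x < 1 := (hf'b (S e)).2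
          have hq0 : 0 < 1 - p e := by linarith [hp1 e]
          have hd1 : u * (1 - p e) < 1 - u * p e * x := by
            nlinarith [hp0 e, hp1 e,
              mul_lt_mul_of_pos_left hx1 (mul_pos hu0 (hp0 e))]
          have hd2 : 1 - u * p e * x ≤ 1 := by
            nlinarith [mul_pos (mul_pos hu0 (hp0 e)) hx0]
          have hd0 : 0 < 1 - u * p e * x := by
            nlinarith [mul_pos hu0 hq0]
          constructor
          · calc u * (1 - p e) = u * (1 - p e) / 1 := by ring
              _ ≤ u * (1 - p e) / (1 - u * p e * x) := by
                  apply div_le_div_of_nonneg_left (le_of_lt (mul_pos hu0 hq0)) hd0 hd2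
          · rw [div_lt_one hd0]; exact hd1
  intro n
  obtain ⟨⟨hfm, hfb⟩, ⟨hf'm, hf'b⟩⟩ := key n
  have hlogup : Integrable (fun e => Real.log (u * p e)) m := by
    have : (fun e => Real.log (u * p e)) =
        fun e => Real.log u + Real.log (p e) := by
      funext e; rw [Real.log_mul (ne_of_gt hu0) (ne_of_gt (hp0 e))]
    rw [this]
    exact (integrable_const _).add hlogp
  have hloguq : Integrable (fun e => Real.log (u * (1 - p e))) m := by
    have : (fun e => Real.log (u * (1 - p e))) =
        fun e => Real.log u + Real.log (1 - p e) := by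
      funext e
      rw [Real.log_mul (ne_of_gt hu0) (ne_of_gt (by linarith [hp1 e]))]
    rw [this]
    exact (integrable_const _).add hlogq
  constructor
  · exact aux_int_log m (f n) (fun e => u * p e) hfm hlogup
      (fun e => mul_pos hu0 (hp0 e)) (fun e => (hfb e).1) (fun e => le_of_lt (hfb e).2)
  · exact aux_int_log m (f' n) (fun e => u * (1 - p e)) hf'm hloguq
      (fun e => mul_pos hu0 (by linarith [hp1 e])) (fun e => (hf'b e).1)
      (fun e => le_of_lt (hf'b e).2)
end

section
/- If log p and log q are m-integrable, then for every integer n ≥ 0 one has ∫ log f[n] dm = ∫ log f'[n] dm + ∫ log(p/q) dm. -/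
open MeasureTheory

theorem stmt_3 {E : Type*} [MeasurableSpace E] (m : Measure E)
    [IsProbabilityMeasure m]
    (S : E ≃ E) (hS : MeasurePreserving S m m) (hSsymm : Measurable ⇑S.symm)
    (p : E → ℝ) (hpm : Measurable p)
    (hp0 : ∀ e, 0 < p e) (hp1 : ∀ e, p e < 1)
    (u : ℝ) (hu0 : 0 < u) (hu1 : u < 1)
    (f f' : ℕ → E → ℝ)
    (hf0 : ∀ e, f 0 e = u * p e)
    (hfs : ∀ n e, f (n + 1) e = u * p e / (1 - u * (1 - p e) * f n (S.symm e)))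
    (hf'0 : ∀ e, f' 0 e = u * (1 - p e))
    (hf's : ∀ n e, f' (n + 1) e = u * (1 - p e) / (1 - u * p e * f' n (S e)))
    (hlogp : Integrable (fun e => Real.log (p e)) m)
    (hlogq : Integrable (fun e => Real.log (1 - p e)) m) :
    ∀ n : ℕ, ∫ e, Real.log (f n e) ∂m =
      ∫ e, Real.log (f' n e) ∂m + ∫ e, Real.log (p e / (1 - p e)) ∂m := by
  have hq0 : ∀ e, 0 < 1 - p e := fun e => by linarith [hp1 e]
  have hu1' : (0:ℝ) < 1 - u := by linarith
  have hSm : Measurable ⇑S := hS.measurable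
  let Sme : E ≃ᵐ E :=
    { toEquiv := S, measurable_toFun := hSm, measurable_invFun := hSsymm }
  have hSsymmP : MeasurePreserving ⇑S.symm m m := by
    refine ⟨hSsymm, ?_⟩
    conv_lhs => rw [← hS.map_eq]
    rw [Measure.map_map hSsymm hSm]
    simp
  have hcompS : ∀ g : E → ℝ, ∫ e, g (S e) ∂m = ∫ e, g e ∂m :=
    fun g => hS.integral_comp Sme.measurableEmbedding g
  have hcompS' : ∀ g : E → ℝ, ∫ e, g (S.symm e) ∂m = ∫ e, g e ∂m :=
    fun g => hSsymmP.integral_comp Sme.symm.measurableEmbedding g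
  have hiter : ∀ (k : ℕ) (g : E → ℝ), ∫ e, g ((⇑S)^[k] e) ∂m = ∫ e, g e ∂m := by
    intro k
    induction k with
    | zero => intro g; simp
    | succ k ih =>
      intro g
      have h1 : (fun e => g ((⇑S)^[k+1] e)) = fun e => (fun x => g ((⇑S)^[k] x)) (S e) := by
        funext e
        simp [Function.iterate_succ_apply]
      rw [h1, hcompS (fun x => g ((⇑S)^[k] x))]
      exact ih g
  -- iterate helpers
  have hTS : ∀ (k : ℕ) (e : E), (⇑S)^[k] (S e) = (⇑S)^[k+1] e := by
    intro k e; rw [Function.iterate_succ_apply]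
  have hTsucc : ∀ (k : ℕ) (e : E), (⇑S)^[k+1] e = S ((⇑S)^[k] e) := by
    intro k e; rw [Function.iterate_succ_apply']
  have hsymmT : ∀ (k : ℕ) (e : E), S.symm ((⇑S)^[k+1] e) = (⇑S)^[k] e := by
    intro k e; rw [hTsucc, Equiv.symm_apply_apply]
  -- bounds on f and f'
  have hfb : ∀ n e, 0 < f n e ∧ f n e < 1 := by
    intro n
    induction n with
    | zero =>
      intro e
      rw [hf0]
      constructor
      · exact mul_pos hu0 (hp0 e)
      · nlinarith [hp0 e, hp1 e, mul_pos hu0 (hq0 e)]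
    | succ n ih =>
      intro e
      obtain ⟨h1, h2⟩ := ih (S.symm e)
      rw [hfs]
      have key : u * (1 - p e) * f n (S.symm e) < u * (1 - p e) :=
        mul_lt_of_lt_one_right (mul_pos hu0 (hq0 e)) h2
      have key2 : 0 < u * p e := mul_pos hu0 (hp0 e)
      have hden : 0 < 1 - u * (1 - p e) * f n (S.symm e) := by nlinarith
      constructor
      · exact div_pos (mul_pos hu0 (hp0 e)) hden
      · rw [div_lt_one hden]; nlinarith
  have hf'b : ∀ n e, 0 < f' n e ∧ f' n e < 1 := by
    intro n
    induction n with
    | zero =>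
      intro e
      rw [hf'0]
      constructor
      · exact mul_pos hu0 (hq0 e)
      · nlinarith [hq0 e, hp1 e, mul_pos hu0 (hp0 e)]
    | succ n ih =>
      intro e
      obtain ⟨h1, h2⟩ := ih (S e)
      rw [hf's]
      have key : u * p e * f' n (S e) < u * p e :=
        mul_lt_of_lt_one_right (mul_pos hu0 (hp0 e)) h2
      have key2 : 0 < u * (1 - p e) := mul_pos hu0 (hq0 e)
      have hden : 0 < 1 - u * p e * f' n (S e) := by nlinarith
      constructor
      · exact div_pos (mul_pos hu0 (hq0 e)) hden
      · rw [div_lt_one hden]; nlinarith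
  -- denominators
  have hDA : ∀ n e, 1 - u < 1 - u * (1 - p e) * f n (S.symm e) ∧
      1 - u * (1 - p e) * f n (S.symm e) ≤ 1 := by
    intro n e
    obtain ⟨h1, h2⟩ := hfb n (S.symm e)
    have key : u * (1 - p e) * f n (S.symm e) < u * (1 - p e) :=
      mul_lt_of_lt_one_right (mul_pos hu0 (hq0 e)) h2
    constructor
    · nlinarith [mul_pos hu0 (hp0 e)]
    · nlinarith [mul_pos (mul_pos hu0 (hq0 e)) h1]
  have hDC : ∀ n e, 1 - u < 1 - u * p e * f' n (S e) ∧
      1 - u * p e * f' n (S e) ≤ 1 := by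
    intro n e
    obtain ⟨h1, h2⟩ := hf'b n (S e)
    have key : u * p e * f' n (S e) < u * p e :=
      mul_lt_of_lt_one_right (mul_pos hu0 (hp0 e)) h2
    constructor
    · nlinarith [mul_pos hu0 (hq0 e)]
    · nlinarith [mul_pos (mul_pos hu0 (hp0 e)) h1]
  -- the auxiliary products
  let A : ℕ → E → ℝ := fun n => Nat.rec (motive := fun _ => E → ℝ) (fun _ => 1)
    (fun k Ak e => (1 - u * (1 - p e) * f k (S.symm e)) * Ak (S.symm e)) n
  let C : ℕ → E → ℝ := fun n => Nat.rec (motive := fun _ => E → ℝ) (fun _ => 1)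
    (fun k Ck e => (1 - u * p e * f' k (S e)) * Ck (S e)) n
  have hA0 : ∀ e, A 0 e = 1 := fun _ => rfl
  have hAs : ∀ n e, A (n+1) e = (1 - u * (1 - p e) * f n (S.symm e)) * A n (S.symm e) :=
    fun _ _ => rfl
  have hC0 : ∀ e, C 0 e = 1 := fun _ => rfl
  have hCs : ∀ n e, C (n+1) e = (1 - u * p e * f' n (S e)) * C n (S e) :=
    fun _ _ => rfl
  -- bounds on A and C
  have hAb : ∀ n e, 0 < A n e ∧ (1-u)^n ≤ A n e ∧ A n e ≤ 1 := by
    intro n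
    induction n with
    | zero => intro e; rw [hA0]; norm_num
    | succ n ih =>
      intro e
      obtain ⟨h1, h2, h3⟩ := ih (S.symm e)
      obtain ⟨h4, h5⟩ := hDA n e
      rw [hAs]
      refine ⟨by nlinarith, ?_, by nlinarith⟩
      have : (1-u)^(n+1) = (1-u) * (1-u)^n := by ring
      rw [this]
      have h6 : (0:ℝ) ≤ (1-u)^n := le_of_lt (pow_pos hu1' n)
      nlinarith
  have hCb : ∀ n e, 0 < C n e ∧ (1-u)^n ≤ C n e ∧ C n e ≤ 1 := by
    intro n
    induction n with
    | zero => intro e; rw [hC0]; norm_num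
    | succ n ih =>
      intro e
      obtain ⟨h1, h2, h3⟩ := ih (S e)
      obtain ⟨h4, h5⟩ := hDC n e
      rw [hCs]
      refine ⟨by nlinarith, ?_, by nlinarith⟩
      have : (1-u)^(n+1) = (1-u) * (1-u)^n := by ring
      rw [this]
      have h6 : (0:ℝ) ≤ (1-u)^n := le_of_lt (pow_pos hu1' n)
      nlinarith
  -- key multiplicative identities
  have hfA : ∀ n e, f (n+1) e * A (n+1) e = u * p e * A n (S.symm e) := by
    intro n e
    rw [hfs, hAs]
    have hD : (1 - u * (1 - p e) * f n (S.symm e)) ≠ 0 := ne_of_gt (lt_trans hu1' (hDA n e).1)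
    field_simp
  have hf'C : ∀ n e, f' (n+1) e * C (n+1) e = u * (1 - p e) * C n (S e) := by
    intro n e
    rw [hf's, hCs]
    have hD : (1 - u * p e * f' n (S e)) ≠ 0 := ne_of_gt (lt_trans hu1' (hDC n e).1)
    field_simp
  -- front recursions
  have hAfront : ∀ n e, A (n+2) e =
      A (n+1) (S.symm e) - (u * (1 - p e)) * (u * p (S.symm e)) * A n (S.symm (S.symm e)) := by
    intro n e
    have h1 := hfA n (S.symm e)
    rw [hAs (n+1) e]
    linear_combination (-(u * (1 - p e))) * h1
  have hCfront : ∀ n e, C (n+2) e =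
      C (n+1) (S e) - (u * p e) * (u * (1 - p (S e))) * C n (S (S e)) := by
    intro n e
    have h1 := hf'C n (S e)
    rw [hCs (n+1) e]
    linear_combination (-(u * p e)) * h1
  have hC1 : ∀ e, C 1 e = 1 - (u * p e) * (u * (1 - p (S e))) := by
    intro e
    have k : C 1 e = (1 - u * p e * f' 0 (S e)) * C 0 (S e) := hCs 0 e
    rw [k, hf'0, hC0]
    ring
  -- back recursion for C (two-step induction)
  have hCback : ∀ n, (∀ e, C (n+2) e = C (n+1) e -
        (u * p ((⇑S)^[n+1] e)) * (u * (1 - p ((⇑S)^[n+2] e))) * C n e) ∧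
      (∀ e, C (n+3) e = C (n+2) e -
        (u * p ((⇑S)^[n+2] e)) * (u * (1 - p ((⇑S)^[n+3] e))) * C n.succ e) := by
    intro n
    induction n with
    | zero =>
      constructor
      · intro e
        show C 2 e = C 1 e - (u * p (S e)) * (u * (1 - p (S (S e)))) * C 0 e
        have k0 : C 2 e = C 1 (S e) - (u * p e) * (u * (1 - p (S e))) * C 0 (S (S e)) :=
          hCfront 0 e
        rw [k0]
        simp only [hC1, hC0]
        ring
      · intro e
        show C 3 e = C 2 e - (u * p (S (S e))) * (u * (1 - p (S (S (S e))))) * C 1 e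
        have k1 : C 3 e = C 2 (S e) - (u * p e) * (u * (1 - p (S e))) * C 1 (S (S e)) :=
          hCfront 1 e
        have k2 : C 2 (S e) = C 1 (S (S e)) -
            (u * p (S e)) * (u * (1 - p (S (S e)))) * C 0 (S (S (S e))) := hCfront 0 (S e)
        have k3 : C 2 e = C 1 (S e) - (u * p e) * (u * (1 - p (S e))) * C 0 (S (S e)) :=
          hCfront 0 e
        rw [k1, k2, k3]
        simp only [hC1, hC0]
        ring
    | succ n ih =>
      obtain ⟨ihn, ihn1⟩ := ih
      refine ⟨ihn1, ?_⟩
      intro e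
      have h1 := ihn1 (S e)
      have h2 := ihn (S (S e))
      simp only [hTS] at h1
      have h2' : C (n+2) (S (S e)) = C (n+1) (S (S e)) -
          u * p ((⇑S)^[n+3] e) * (u * (1 - p ((⇑S)^[n+4] e))) * C n (S (S e)) := by
        rw [h2]
        have e1 : (⇑S)^[n+1] (S (S e)) = (⇑S)^[n+3] e := by
          rw [show S (S e) = (⇑S)^[2] e from rfl, ← Function.iterate_add_apply]
        have e2 : (⇑S)^[n+2] (S (S e)) = (⇑S)^[n+4] e := by
          rw [show S (S e) = (⇑S)^[2] e from rfl, ← Function.iterate_add_apply]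
        rw [e1, e2]
      have h3 := hCfront (n+2) e
      have h4 := hCfront (n+1) e
      have h5 := hCfront n e
      have e3 : n + 1 + 1 + 1 = n + 3 := rfl
      have e4 : n + 1 + 1 = n + 2 := rfl
      have e5 : n + 1 + 2 = n + 3 := rfl
      have e6 : n + 1 + 3 = n + 4 := rfl
      have e7 : n + 2 + 1 = n + 3 := rfl
      have e8 : n + 2 + 2 = n + 4 := rfl
      have e9 : n + 3 + 1 = n + 4 := rfl
      simp only [Nat.succ_eq_add_one, e3, e4, e5, e6, e7, e8, e9] at h1 h2' h3 h4 h5 ⊢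
      linear_combination h3 + h1 - (u * p e) * (u * (1 - p (S e))) * h2' - h4 +
        (u * p ((⇑S)^[n+3] e)) * (u * (1 - p ((⇑S)^[n+4] e))) * h5
  -- reversal identity
  have hREV : ∀ n, (∀ e, A n ((⇑S)^[n] e) = C n e) ∧
      (∀ e, A (n+1) ((⇑S)^[n+1] e) = C (n+1) e) := by
    intro n
    induction n with
    | zero =>
      constructor
      · intro e; simp [hA0, hC0]
      · intro e
        show A 1 (S e) = C 1 e
        have k1 : A 1 (S e) =
            (1 - u * (1 - p (S e)) * f 0 (S.symm (S e))) * A 0 (S.symm (S e)) := hAs 0 (S e)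
        rw [k1, Equiv.symm_apply_apply, hf0, hA0, hC1]
        ring
    | succ n ih =>
      obtain ⟨ihn, ihn1⟩ := ih
      refine ⟨ihn1, ?_⟩
      intro e
      have h1 := hAfront n ((⇑S)^[n+2] e)
      rw [hsymmT (n+1) e] at h1
      rw [hsymmT n e] at h1
      rw [ihn1 e, ihn e] at h1
      rw [show n + 1 + 1 = n + 2 from rfl]
      rw [h1, (hCback n).1 e, hTsucc (n+1) e]
      ring
  -- measurability
  have hfm : ∀ n, Measurable (f n) := by
    intro n
    induction n with
    | zero =>
      have : f 0 = fun e => u * p e := funext hf0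
      rw [this]; exact measurable_const.mul hpm
    | succ n ih =>
      have : f (n+1) = fun e => u * p e / (1 - u * (1 - p e) * f n (S.symm e)) :=
        funext (hfs n)
      rw [this]
      exact (measurable_const.mul hpm).div
        (measurable_const.sub ((measurable_const.mul (measurable_const.sub hpm)).mul
          (ih.comp hSsymm)))
  have hf'm : ∀ n, Measurable (f' n) := by
    intro n
    induction n with
    | zero =>
      have : f' 0 = fun e => u * (1 - p e) := funext hf'0
      rw [this]; exact measurable_const.mul (measurable_const.sub hpm)
    | succ n ih =>
      have : f' (n+1) = fun e => u * (1 - p e) / (1 - u * p e * f' n (S e)) :=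
        funext (hf's n)
      rw [this]
      exact (measurable_const.mul (measurable_const.sub hpm)).div
        (measurable_const.sub ((measurable_const.mul hpm).mul (ih.comp hSm)))
  have hAm : ∀ n, Measurable (A n) := by
    intro n
    induction n with
    | zero => exact measurable_const
    | succ n ih =>
      have : A (n+1) = fun e => (1 - u * (1 - p e) * f n (S.symm e)) * A n (S.symm e) :=
        funext (hAs n)
      rw [this]
      exact (measurable_const.sub ((measurable_const.mul (measurable_const.sub hpm)).mul
        ((hfm n).comp hSsymm))).mul (ih.comp hSsymm)
  have hCm : ∀ n, Measurable (C n) := by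
    intro n
    induction n with
    | zero => exact measurable_const
    | succ n ih =>
      have : C (n+1) = fun e => (1 - u * p e * f' n (S e)) * C n (S e) :=
        funext (hCs n)
      rw [this]
      exact (measurable_const.sub ((measurable_const.mul hpm).mul
        ((hf'm n).comp hSm))).mul (ih.comp hSm)
  -- integrability of log of A and C composed with measurable maps
  have hlog1u : Real.log (1-u) ≤ 0 := Real.log_nonpos (by linarith) (by linarith)
  have hIntLog : ∀ (B : ℕ → E → ℝ), (∀ n, Measurable (B n)) →
      (∀ n e, 0 < B n e ∧ (1-u)^n ≤ B n e ∧ B n e ≤ 1) →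
      ∀ n (T : E → E), Measurable T → Integrable (fun e => Real.log (B n (T e))) m := by
    intro B hBm hBb n T hT
    refine (integrable_const ((n : ℝ) * |Real.log (1-u)|)).mono'
      ((Real.measurable_log.comp ((hBm n).comp hT)).aestronglyMeasurable)
      (ae_of_all _ ?_)
    intro e
    obtain ⟨h1, h2, h3⟩ := hBb n (T e)
    have h4 : Real.log (B n (T e)) ≤ 0 := Real.log_nonpos (le_of_lt h1) h3
    have h5 : Real.log ((1-u)^n) ≤ Real.log (B n (T e)) :=
      Real.log_le_log (pow_pos hu1' n) h2
    rw [Real.log_pow] at h5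
    rw [Real.norm_eq_abs, abs_of_nonpos h4, abs_of_nonpos hlog1u]
    nlinarith
  -- log formulas
  have hlogf : ∀ n e, Real.log (f (n+1) e) =
      Real.log u + Real.log (p e) + Real.log (A n (S.symm e)) - Real.log (A (n+1) e) := by
    intro n e
    have hA1 : A (n+1) e ≠ 0 := ne_of_gt (hAb (n+1) e).1
    have hAn : A n (S.symm e) ≠ 0 := ne_of_gt (hAb n (S.symm e)).1
    have hfe : f (n+1) e = u * p e * A n (S.symm e) / A (n+1) e := by
      rw [eq_div_iff hA1]; exact hfA n e
    have hup : u * p e ≠ 0 := ne_of_gt (mul_pos hu0 (hp0 e))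
    have hupA : u * p e * A n (S.symm e) ≠ 0 := mul_ne_zero hup hAn
    rw [hfe, Real.log_div hupA hA1, Real.log_mul hup hAn,
      Real.log_mul (ne_of_gt hu0) (ne_of_gt (hp0 e))]
  have hlogf' : ∀ n e, Real.log (f' (n+1) e) =
      Real.log u + Real.log (1 - p e) + Real.log (C n (S e)) - Real.log (C (n+1) e) := by
    intro n e
    have hC1' : C (n+1) e ≠ 0 := ne_of_gt (hCb (n+1) e).1
    have hCn : C n (S e) ≠ 0 := ne_of_gt (hCb n (S e)).1
    have hfe : f' (n+1) e = u * (1 - p e) * C n (S e) / C (n+1) e := by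
      rw [eq_div_iff hC1']; exact hf'C n e
    have huq : u * (1 - p e) ≠ 0 := ne_of_gt (mul_pos hu0 (hq0 e))
    have huqC : u * (1 - p e) * C n (S e) ≠ 0 := mul_ne_zero huq hCn
    rw [hfe, Real.log_div huqC hC1', Real.log_mul huq hCn,
      Real.log_mul (ne_of_gt hu0) (ne_of_gt (hq0 e))]
  -- ∫ log C n = ∫ log A n
  have hCA : ∀ n, ∫ e, Real.log (C n e) ∂m = ∫ e, Real.log (A n e) ∂m := by
    intro n
    have h1 : (fun e => Real.log (C n e)) =
        fun e => Real.log (A n ((⇑S)^[n] e)) :=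
      funext fun e => (congrArg Real.log ((hREV n).1 e)).symm
    rw [h1]
    exact hiter n (fun x => Real.log (A n x))
  -- ∫ log (p/q)
  have hlogpq : ∫ e, Real.log (p e / (1 - p e)) ∂m =
      (∫ e, Real.log (p e) ∂m) - ∫ e, Real.log (1 - p e) ∂m := by
    have h1 : (fun e => Real.log (p e / (1 - p e))) =
        fun e => Real.log (p e) - Real.log (1 - p e) := by
      funext e
      rw [Real.log_div (ne_of_gt (hp0 e)) (ne_of_gt (hq0 e))]
    rw [h1, integral_sub hlogp hlogq]
  intro n
  match n with
  | 0 =>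
    have h1 : (fun e => Real.log (f 0 e)) = fun e => Real.log u + Real.log (p e) := by
      funext e
      rw [hf0 e, Real.log_mul (ne_of_gt hu0) (ne_of_gt (hp0 e))]
    have h2 : (fun e => Real.log (f' 0 e)) = fun e => Real.log u + Real.log (1 - p e) := by
      funext e
      rw [hf'0 e, Real.log_mul (ne_of_gt hu0) (ne_of_gt (hq0 e))]
    rw [h1, h2, hlogpq, integral_add (integrable_const _) hlogp,
      integral_add (integrable_const _) hlogq]
    ring
  | Nat.succ n =>
    have hIA1 : Integrable (fun e => Real.log (A n (S.symm e))) m :=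
      hIntLog A hAm hAb n S.symm hSsymm
    have hIA2 : Integrable (fun e => Real.log (A (n+1) e)) m := by
      simpa using hIntLog A hAm hAb (n+1) id measurable_id
    have hIC1 : Integrable (fun e => Real.log (C n (S e))) m :=
      hIntLog C hCm hCb n S hSm
    have hIC2 : Integrable (fun e => Real.log (C (n+1) e)) m := by
      simpa using hIntLog C hCm hCb (n+1) id measurable_id
    have h1 : (fun e => Real.log (f (n+1) e)) = fun e =>
        Real.log u + Real.log (p e) + Real.log (A n (S.symm e)) - Real.log (A (n+1) e) :=
      funext (hlogf n)
    have h2 : (fun e => Real.log (f' (n+1) e)) = fun e =>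
        Real.log u + Real.log (1 - p e) + Real.log (C n (S e)) - Real.log (C (n+1) e) :=
      funext (hlogf' n)
    have hcu : Integrable (fun _ : E => Real.log u) m := integrable_const _
    have I1 : Integrable (fun e => Real.log u + Real.log (p e)) m := hcu.add hlogp
    have I2 : Integrable
        (fun e => Real.log u + Real.log (p e) + Real.log (A n (S.symm e))) m := I1.add hIA1
    have J1 : Integrable (fun e => Real.log u + Real.log (1 - p e)) m := hcu.add hlogq
    have J2 : Integrable
        (fun e => Real.log u + Real.log (1 - p e) + Real.log (C n (S e))) m := J1.add hIC1
    rw [h1, h2, hlogpq,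
      integral_sub I2 hIA2, integral_add I1 hIA1, integral_add hcu hlogp,
      integral_sub J2 hIC2, integral_add J1 hIC1, integral_add hcu hlogq,
      hcompS' (fun x => Real.log (A n x)), hcompS (fun x => Real.log (C n x)),
      hCA n, hCA (n+1)]
    ring
end

section
/- Assume log p and log q are m-integrable. Let f(e) := lim_{n→∞} f[n](e) and f'(e) := lim_{n→∞} f'[n](e) (these pointwise limits exist since the sequences are nondecreasing and bounded by u). Then log f and log f' are m-integrable and ∫ log f dm = ∫ log f' dm + ∫ log(p/q) dm. -/
open MeasureTheory Filter
open Topology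

namespace Stmt4Aux

def Kc : List ℝ → ℝ
  | [] => 1
  | [x] => 1 - x
  | x :: y :: l => Kc (y :: l) - x * Kc l

@[simp] lemma Kc_nil : Kc [] = 1 := rfl
@[simp] lemma Kc_single (x : ℝ) : Kc [x] = 1 - x := rfl
lemma Kc_cons_cons (x y : ℝ) (l : List ℝ) : Kc (x :: y :: l) = Kc (y :: l) - x * Kc l := rfl

lemma Kc_cons (x : ℝ) (l : List ℝ) : Kc (x :: l) = Kc l - x * Kc l.tail := by
  cases l <;> simp [Kc_cons_cons]

lemma tail_dropLast {α : Type*} (z : α) (l : List α) :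
    (List.dropLast (z :: l)).tail = List.dropLast l := by
  cases l <;> simp

lemma Kc_concat : ∀ (l : List ℝ) (x : ℝ), Kc (l ++ [x]) = Kc l - x * Kc l.dropLast
  | [], x => by simp
  | [y], x => by simp [Kc_cons_cons]; ring
  | y :: z :: l, x => by
    have h1 := Kc_concat (z :: l) x
    have h2 := Kc_concat l x
    have h3 := tail_dropLast z l
    have hdl : List.dropLast (y :: z :: l) = y :: List.dropLast (z :: l) := rfl
    simp only [List.cons_append] at h1 ⊢
    rw [Kc_cons_cons, h1, h2, hdl, Kc_cons_cons y z l, Kc_cons y ((z :: l).dropLast), h3]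
    ring

lemma dropLast_rev (m : List ℝ) : m.reverse.dropLast = m.tail.reverse := by
  cases m with
  | nil => rfl
  | cons y m => simp [List.reverse_cons, List.dropLast_concat]

lemma Kc_reverse : ∀ l : List ℝ, Kc l.reverse = Kc l
  | [] => rfl
  | x :: ms => by
    have h1 : Kc ms.reverse = Kc ms := Kc_reverse ms
    have h2 : Kc ms.tail.reverse = Kc ms.tail := Kc_reverse ms.tail
    rw [List.reverse_cons, Kc_concat, h1, dropLast_rev, h2, ← Kc_cons]
  termination_by l => l.length
  decreasing_by
    · simp
    · simp only [List.length_cons, List.length_tail]; omega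

def DD {E : Type*} (T : E → E) (β : E → ℝ) (f : ℕ → E → ℝ) : ℕ → E → ℝ
  | 0, _ => 1
  | n+1, e => (1 - β e * f n (T e)) * DD T β f n (T e)

lemma DD_succ {E : Type*} (T : E → E) (β : E → ℝ) (f : ℕ → E → ℝ) (n : ℕ) (e : E) :
    DD T β f (n+1) e = (1 - β e * f n (T e)) * DD T β f n (T e) := rfl

def LL {E : Type*} (T : E → E) (c : E → ℝ) (n : ℕ) (e : E) : List ℝ :=
  (List.range n).map fun k => c (T^[k] e)

lemma LL_succ {E : Type*} (T : E → E) (c : E → ℝ) (n : ℕ) (e : E) :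
    LL T c (n+1) e = c e :: LL T c n (T e) := by
  simp [LL, List.range_succ_eq_map, List.map_map, Function.comp_def,
    Function.iterate_succ_apply]

lemma LL_succ' {E : Type*} (T : E → E) (c : E → ℝ) (n : ℕ) (e : E) :
    LL T c (n+1) e = LL T c n e ++ [c (T^[n] e)] := by
  simp [LL, List.range_succ]

lemma DD_eq_Kc {E : Type*} (T : E → E) (α β : E → ℝ) (f : ℕ → E → ℝ)
    (hf0 : ∀ e, f 0 e = α e)
    (hfs : ∀ n e, f (n+1) e = α e / (1 - β e * f n (T e)))
    (hpos : ∀ n e, 1 - β e * f n (T e) ≠ 0) :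
    ∀ n e, DD T β f n e = Kc (LL T (fun e => β e * α (T e)) n e) := by
  set c : E → ℝ := fun e => β e * α (T e) with hc
  have key : ∀ n, (∀ e, DD T β f n e = Kc (LL T c n e)) ∧
      (∀ e, DD T β f (n+1) e = Kc (LL T c (n+1) e)) := by
    intro n
    induction n with
    | zero =>
      refine ⟨fun e => by simp [DD, LL], fun e => ?_⟩
      rw [DD_succ, LL_succ]
      simp only [DD, LL, List.range_zero, List.map_nil, Kc_single, hf0, hc]
      ring
    | succ n ih =>
      refine ⟨ih.2, fun e => ?_⟩
      have hG : 1 - β (T e) * f n (T (T e)) ≠ 0 := hpos n (T e)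
      have hD : DD T β f (n+2) e
          = DD T β f (n+1) (T e) - c e * DD T β f n (T (T e)) := by
        rw [DD_succ, DD_succ, hfs n (T e), hc]
        field_simp
      have hK : Kc (LL T c (n+2) e)
          = Kc (LL T c (n+1) (T e)) - c e * Kc (LL T c n (T (T e))) := by
        have : LL T c (n+2) e = c e :: c (T e) :: LL T c n (T (T e)) := by
          rw [LL_succ, LL_succ]
        rw [this, Kc_cons_cons, ← LL_succ]
      rw [hD, hK, ih.2, ih.1]
  exact fun n e => (key n).1 e



-- general bounds lemma
lemma f_bounds {E : Type*} (T : E → E) (r : E → ℝ) (hr0 : ∀ e, 0 < r e) (hr1 : ∀ e, r e < 1)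
    (u : ℝ) (hu0 : 0 < u) (hu1 : u < 1) (f : ℕ → E → ℝ)
    (hf0 : ∀ e, f 0 e = u * r e)
    (hfs : ∀ n e, f (n+1) e = u * r e / (1 - u * (1 - r e) * f n (T e))) :
    ∀ n e, u * r e ≤ f n e ∧ f n e ≤ u := by
  intro n
  induction n with
  | zero =>
    intro e
    rw [hf0]
    constructor
    · exact le_rfl
    · nlinarith [hr0 e, hr1 e]
  | succ n ih =>
    intro e
    have hX := ih (T e)
    have hX0 : 0 < f n (T e) := lt_of_lt_of_le (by nlinarith [hr0 (T e)]) hX.1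
    have hq : (0:ℝ) ≤ 1 - r e := by linarith [hr1 e]
    have hG1 : 1 - u * (1 - r e) * f n (T e) ≤ 1 := by
      nlinarith [mul_nonneg (mul_nonneg hu0.le hq) hX0.le]
    have h1 : u * (1 - r e) * f n (T e) ≤ u * (1 - r e) * u :=
      mul_le_mul_of_nonneg_left hX.2 (mul_nonneg hu0.le hq)
    have h2 : u * (1 - r e) * u ≤ 1 - r e := by nlinarith [mul_nonneg hq (by nlinarith : (0:ℝ) ≤ 1 - u * u)]
    have hGr : r e ≤ 1 - u * (1 - r e) * f n (T e) := by linarith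
    have hG0 : 0 < 1 - u * (1 - r e) * f n (T e) := lt_of_lt_of_le (hr0 e) hGr
    rw [hfs]
    constructor
    · rw [le_div_iff₀ hG0]
      nlinarith [mul_nonneg (mul_pos hu0 (hr0 e)).le (sub_nonneg.2 hG1)]
    · rw [div_le_iff₀ hG0]
      exact mul_le_mul_of_nonneg_left hGr hu0.le


lemma G_bounds {E : Type*} (T : E → E) (r : E → ℝ) (hr0 : ∀ e, 0 < r e) (hr1 : ∀ e, r e < 1)
    (u : ℝ) (hu0 : 0 < u) (hu1 : u < 1) (f : ℕ → E → ℝ)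
    (hf0 : ∀ e, f 0 e = u * r e)
    (hfs : ∀ n e, f (n+1) e = u * r e / (1 - u * (1 - r e) * f n (T e))) :
    ∀ n e, r e ≤ 1 - u * (1 - r e) * f n (T e) ∧ 1 - u * (1 - r e) * f n (T e) ≤ 1 := by
  intro n e
  have hX := f_bounds T r hr0 hr1 u hu0 hu1 f hf0 hfs n (T e)
  have hX0 : 0 < f n (T e) := lt_of_lt_of_le (mul_pos hu0 (hr0 (T e))) hX.1
  have hq : (0:ℝ) ≤ 1 - r e := by linarith [hr1 e]
  have h1 : u * (1 - r e) * f n (T e) ≤ u * (1 - r e) * u :=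
    mul_le_mul_of_nonneg_left hX.2 (mul_nonneg hu0.le hq)
  have h2 : u * (1 - r e) * u ≤ 1 - r e := by
    nlinarith [mul_nonneg hq (by nlinarith : (0:ℝ) ≤ 1 - u * u)]
  exact ⟨by linarith, by nlinarith [mul_nonneg (mul_nonneg hu0.le hq) hX0.le]⟩

end Stmt4Aux


theorem stmt_4 {E : Type*} [MeasurableSpace E] (m : Measure E)
    [IsProbabilityMeasure m]
    (S : E ≃ E) (hS : MeasurePreserving S m m) (hSsymm : Measurable ⇑S.symm)
    (p : E → ℝ) (hpm : Measurable p)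
    (hp0 : ∀ e, 0 < p e) (hp1 : ∀ e, p e < 1)
    (u : ℝ) (hu0 : 0 < u) (hu1 : u < 1)
    (f f' : ℕ → E → ℝ)
    (hf0 : ∀ e, f 0 e = u * p e)
    (hfs : ∀ n e, f (n + 1) e = u * p e / (1 - u * (1 - p e) * f n (S.symm e)))
    (hf'0 : ∀ e, f' 0 e = u * (1 - p e))
    (hf's : ∀ n e, f' (n + 1) e = u * (1 - p e) / (1 - u * p e * f' n (S e)))
    (hlogp : Integrable (fun e => Real.log (p e)) m)
    (hlogq : Integrable (fun e => Real.log (1 - p e)) m)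
    (F F' : E → ℝ)
    (hF : ∀ e, Tendsto (fun n => f n e) atTop (nhds (F e)))
    (hF' : ∀ e, Tendsto (fun n => f' n e) atTop (nhds (F' e))) :
    Integrable (fun e => Real.log (F e)) m ∧
      Integrable (fun e => Real.log (F' e)) m ∧
      ∫ e, Real.log (F e) ∂m =
        ∫ e, Real.log (F' e) ∂m + ∫ e, Real.log (p e / (1 - p e)) ∂m := by
  have hq0 : ∀ e, 0 < 1 - p e := fun e => by linarith [hp1 e]
  have hq1 : ∀ e, 1 - p e < 1 := fun e => by linarith [hp0 e]
  -- bounds on f and f'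
  have hf's2 : ∀ n e, f' (n + 1) e = u * (1 - p e) / (1 - u * (1 - (1 - p e)) * f' n (S e)) := by
    intro n e; rw [hf's n e]; ring_nf
  have hfb : ∀ n e, u * p e ≤ f n e ∧ f n e ≤ u :=
    Stmt4Aux.f_bounds S.symm p hp0 hp1 u hu0 hu1 f hf0 hfs
  have hf'b : ∀ n e, u * (1 - p e) ≤ f' n e ∧ f' n e ≤ u :=
    Stmt4Aux.f_bounds S (fun e => 1 - p e) hq0 hq1 u hu0 hu1 f' hf'0 hf's2
  have hfpos : ∀ n e, 0 < f n e := fun n e =>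
    lt_of_lt_of_le (mul_pos hu0 (hp0 e)) (hfb n e).1
  have hf'pos : ∀ n e, 0 < f' n e := fun n e =>
    lt_of_lt_of_le (mul_pos hu0 (hq0 e)) (hf'b n e).1
  have hGf : ∀ n e, p e ≤ 1 - u * (1 - p e) * f n (S.symm e) ∧
      1 - u * (1 - p e) * f n (S.symm e) ≤ 1 :=
    Stmt4Aux.G_bounds S.symm p hp0 hp1 u hu0 hu1 f hf0 hfs
  have hGf' : ∀ n e, 1 - p e ≤ 1 - u * p e * f' n (S e) ∧
      1 - u * p e * f' n (S e) ≤ 1 := by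
    intro n e
    have h := Stmt4Aux.G_bounds S (fun e => 1 - p e) hq0 hq1 u hu0 hu1 f' hf'0 hf's2 n e
    simpa [sub_sub_cancel] using h
  have hGfpos : ∀ n e, 0 < 1 - u * (1 - p e) * f n (S.symm e) := fun n e =>
    lt_of_lt_of_le (hp0 e) (hGf n e).1
  have hGf'pos : ∀ n e, 0 < 1 - u * p e * f' n (S e) := fun n e =>
    lt_of_lt_of_le (hq0 e) (hGf' n e).1
  -- measurability
  have hfm : ∀ n, Measurable (f n) := by
    intro n
    induction n with
    | zero =>
      have h : f 0 = fun e => u * p e := funext hf0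
      rw [h]; exact measurable_const.mul hpm
    | succ n ih =>
      have h : f (n+1) = fun e => u * p e / (1 - u * (1 - p e) * f n (S.symm e)) :=
        funext (hfs n)
      rw [h]
      exact (measurable_const.mul hpm).div
        (measurable_const.sub ((measurable_const.mul (measurable_const.sub hpm)).mul
          (ih.comp hSsymm)))
  have hf'm : ∀ n, Measurable (f' n) := by
    intro n
    induction n with
    | zero =>
      have h : f' 0 = fun e => u * (1 - p e) := funext hf'0
      rw [h]; exact measurable_const.mul (measurable_const.sub hpm)
    | succ n ih =>
      have h : f' (n+1) = fun e => u * (1 - p e) / (1 - u * p e * f' n (S e)) :=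
        funext (hf's n)
      rw [h]
      exact (measurable_const.mul (measurable_const.sub hpm)).div
        (measurable_const.sub ((measurable_const.mul hpm).mul (ih.comp hS.measurable)))
  -- measurable equiv and integral invariance
  let Se : E ≃ᵐ E := { toEquiv := S, measurable_toFun := hS.measurable,
                       measurable_invFun := hSsymm }
  have hSmp : MeasurePreserving (⇑Se) m m := hS
  have hTmp : MeasurePreserving (⇑Se.symm) m m := hSmp.symm Se
  have hintS : ∀ g : E → ℝ, ∫ e, g (S e) ∂m = ∫ e, g e ∂m := by
    intro g
    have h1 : ∫ e, g e ∂(Measure.map Se m) = ∫ e, g (Se e) ∂m :=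
      MeasureTheory.integral_map_equiv Se g
    rw [hSmp.map_eq] at h1
    exact h1.symm
  have hintT : ∀ g : E → ℝ, ∫ e, g (S.symm e) ∂m = ∫ e, g e ∂m := by
    intro g
    have h1 : ∫ e, g e ∂(Measure.map Se.symm m) = ∫ e, g (Se.symm e) ∂m :=
      MeasureTheory.integral_map_equiv Se.symm g
    rw [hTmp.map_eq] at h1
    exact h1.symm
  have hintTn : ∀ (g : E → ℝ) (n : ℕ), ∫ e, g ((⇑S.symm)^[n] e) ∂m = ∫ e, g e ∂m := by
    intro g n
    induction n with
    | zero => simp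
    | succ n ih =>
      have h1 : ∀ e : E, (⇑S.symm)^[n+1] e = (⇑S.symm)^[n] (S.symm e) := fun e =>
        Function.iterate_succ_apply _ _ _
      calc ∫ e, g ((⇑S.symm)^[n+1] e) ∂m
          = ∫ e, g ((⇑S.symm)^[n] (S.symm e)) ∂m := by simp_rw [h1]
        _ = ∫ e, g ((⇑S.symm)^[n] e) ∂m := hintT (fun x => g ((⇑S.symm)^[n] x))
        _ = ∫ e, g e ∂m := ih
  -- the D functions
  set Df : ℕ → E → ℝ := Stmt4Aux.DD (⇑S.symm) (fun e => u * (1 - p e)) f with hDf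
  set Df' : ℕ → E → ℝ := Stmt4Aux.DD (⇑S) (fun e => u * p e) f' with hDf'
  have hDfsucc : ∀ n e, Df (n+1) e = (1 - u * (1 - p e) * f n (S.symm e)) * Df n (S.symm e) :=
    fun n e => rfl
  have hDf'succ : ∀ n e, Df' (n+1) e = (1 - u * p e * f' n (S e)) * Df' n (S e) :=
    fun n e => rfl
  have hDf0 : ∀ e, Df 0 e = 1 := fun e => rfl
  have hDf'0 : ∀ e, Df' 0 e = 1 := fun e => rfl
  have hDfpos : ∀ n e, 0 < Df n e := by
    intro n
    induction n with
    | zero => intro e; rw [hDf0]; norm_num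
    | succ n ih => intro e; rw [hDfsucc]; exact mul_pos (hGfpos n e) (ih _)
  have hDf'pos : ∀ n e, 0 < Df' n e := by
    intro n
    induction n with
    | zero => intro e; rw [hDf'0]; norm_num
    | succ n ih => intro e; rw [hDf'succ]; exact mul_pos (hGf'pos n e) (ih _)
  have hDfm : ∀ n, Measurable (Df n) := by
    intro n
    induction n with
    | zero => exact measurable_const
    | succ n ih =>
      have h : Df (n+1) = fun e => (1 - u * (1 - p e) * f n (S.symm e)) * Df n (S.symm e) :=
        funext (hDfsucc n)
      rw [h]
      exact (measurable_const.sub ((measurable_const.mul (measurable_const.sub hpm)).mul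
        ((hfm n).comp hSsymm))).mul (ih.comp hSsymm)
  have hDf'm : ∀ n, Measurable (Df' n) := by
    intro n
    induction n with
    | zero => exact measurable_const
    | succ n ih =>
      have h : Df' (n+1) = fun e => (1 - u * p e * f' n (S e)) * Df' n (S e) :=
        funext (hDf'succ n)
      rw [h]
      exact (measurable_const.sub ((measurable_const.mul hpm).mul
        ((hf'm n).comp hS.measurable))).mul (ih.comp hS.measurable)
  -- integrability of log of the G factors
  have hlogGf : ∀ n, Integrable (fun e => Real.log (1 - u * (1 - p e) * f n (S.symm e))) m := by
    intro n
    apply Integrable.mono' hlogp.abs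
    · exact (Real.measurable_log.comp (measurable_const.sub
        ((measurable_const.mul (measurable_const.sub hpm)).mul
          ((hfm n).comp hSsymm)))).aestronglyMeasurable
    · refine Eventually.of_forall fun e => ?_
      have h1 := (hGf n e).1
      have h2 := (hGf n e).2
      rw [Real.norm_eq_abs, abs_of_nonpos (Real.log_nonpos (hGfpos n e).le h2)]
      have h3 : Real.log (p e) ≤ Real.log (1 - u * (1 - p e) * f n (S.symm e)) :=
        Real.log_le_log (hp0 e) h1
      have h4 : Real.log (p e) ≤ 0 := Real.log_nonpos (hp0 e).le (hp1 e).le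
      rw [abs_of_nonpos h4]
      linarith
  have hlogGf' : ∀ n, Integrable (fun e => Real.log (1 - u * p e * f' n (S e))) m := by
    intro n
    apply Integrable.mono' hlogq.abs
    · exact (Real.measurable_log.comp (measurable_const.sub
        ((measurable_const.mul hpm).mul
          ((hf'm n).comp hS.measurable)))).aestronglyMeasurable
    · refine Eventually.of_forall fun e => ?_
      have h1 := (hGf' n e).1
      have h2 := (hGf' n e).2
      rw [Real.norm_eq_abs, abs_of_nonpos (Real.log_nonpos (hGf'pos n e).le h2)]
      have h3 : Real.log (1 - p e) ≤ Real.log (1 - u * p e * f' n (S e)) :=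
        Real.log_le_log (hq0 e) h1
      have h4 : Real.log (1 - p e) ≤ 0 := Real.log_nonpos (hq0 e).le (hq1 e).le
      rw [abs_of_nonpos h4]
      linarith
  -- integrability of log Df
  have hlogDf : ∀ n, Integrable (fun e => Real.log (Df n e)) m := by
    intro n
    induction n with
    | zero =>
      have h : (fun e => Real.log (Df 0 e)) = fun _ => (0:ℝ) := funext fun e => by
        rw [hDf0]; exact Real.log_one
      rw [h]; exact integrable_const 0
    | succ n ih =>
      have h : (fun e => Real.log (Df (n+1) e)) = fun e =>
          Real.log (1 - u * (1 - p e) * f n (S.symm e)) + Real.log (Df n (S.symm e)) := by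
        funext e
        rw [hDfsucc, Real.log_mul (hGfpos n e).ne' (hDfpos n (S.symm e)).ne']
      rw [h]
      exact (hlogGf n).add ((hTmp.integrable_comp (Real.measurable_log.comp (hDfm n)).aestronglyMeasurable).mpr ih)
  have hlogDf' : ∀ n, Integrable (fun e => Real.log (Df' n e)) m := by
    intro n
    induction n with
    | zero =>
      have h : (fun e => Real.log (Df' 0 e)) = fun _ => (0:ℝ) := funext fun e => by
        rw [hDf'0]; exact Real.log_one
      rw [h]; exact integrable_const 0
    | succ n ih =>
      have h : (fun e => Real.log (Df' (n+1) e)) = fun e =>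
          Real.log (1 - u * p e * f' n (S e)) + Real.log (Df' n (S e)) := by
        funext e
        rw [hDf'succ, Real.log_mul (hGf'pos n e).ne' (hDf'pos n (S e)).ne']
      rw [h]
      exact (hlogGf' n).add ((hSmp.integrable_comp (Real.measurable_log.comp (hDf'm n)).aestronglyMeasurable).mpr ih)
  -- uniform log bounds
  have hlogbound : ∀ (x : ℝ) (e : E), u * p e ≤ x → x ≤ u →
      ‖Real.log x‖ ≤ |Real.log u| + |Real.log (p e)| := by
    intro x e h1 h2
    have hx0 : 0 < x := lt_of_lt_of_le (mul_pos hu0 (hp0 e)) h1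
    have hxu : x ≤ 1 := le_trans h2 hu1.le
    rw [Real.norm_eq_abs, abs_of_nonpos (Real.log_nonpos hx0.le hxu)]
    have h3 : Real.log (u * p e) ≤ Real.log x := Real.log_le_log (mul_pos hu0 (hp0 e)) h1
    rw [Real.log_mul hu0.ne' (hp0 e).ne'] at h3
    have h4 : Real.log u ≤ 0 := Real.log_nonpos hu0.le hu1.le
    have h5 : Real.log (p e) ≤ 0 := Real.log_nonpos (hp0 e).le (hp1 e).le
    rw [abs_of_nonpos h4, abs_of_nonpos h5]
    linarith
  have hlogbound' : ∀ (x : ℝ) (e : E), u * (1 - p e) ≤ x → x ≤ u →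
      ‖Real.log x‖ ≤ |Real.log u| + |Real.log (1 - p e)| := by
    intro x e h1 h2
    have hx0 : 0 < x := lt_of_lt_of_le (mul_pos hu0 (hq0 e)) h1
    have hxu : x ≤ 1 := le_trans h2 hu1.le
    rw [Real.norm_eq_abs, abs_of_nonpos (Real.log_nonpos hx0.le hxu)]
    have h3 : Real.log (u * (1 - p e)) ≤ Real.log x := Real.log_le_log (mul_pos hu0 (hq0 e)) h1
    rw [Real.log_mul hu0.ne' (hq0 e).ne'] at h3
    have h4 : Real.log u ≤ 0 := Real.log_nonpos hu0.le hu1.le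
    have h5 : Real.log (1 - p e) ≤ 0 := Real.log_nonpos (hq0 e).le (hq1 e).le
    rw [abs_of_nonpos h4, abs_of_nonpos h5]
    linarith
  have hboundp : Integrable (fun e => |Real.log u| + |Real.log (p e)|) m :=
    (integrable_const _).add hlogp.abs
  have hboundq : Integrable (fun e => |Real.log u| + |Real.log (1 - p e)|) m :=
    (integrable_const _).add hlogq.abs
  have hlogf_int : ∀ n, Integrable (fun e => Real.log (f n e)) m := by
    intro n
    apply Integrable.mono' hboundp
    · exact (Real.measurable_log.comp (hfm n)).aestronglyMeasurable
    · exact Eventually.of_forall fun e => hlogbound (f n e) e (hfb n e).1 (hfb n e).2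
  have hlogf'_int : ∀ n, Integrable (fun e => Real.log (f' n e)) m := by
    intro n
    apply Integrable.mono' hboundq
    · exact (Real.measurable_log.comp (hf'm n)).aestronglyMeasurable
    · exact Eventually.of_forall fun e => hlogbound' (f' n e) e (hf'b n e).1 (hf'b n e).2
  -- value of ∫ log (u * p e)
  have hlogup : Integrable (fun e => Real.log (u * p e)) m := by
    have h : (fun e => Real.log (u * p e)) = fun e => Real.log u + Real.log (p e) :=
      funext fun e => Real.log_mul hu0.ne' (hp0 e).ne'
    rw [h]; exact (integrable_const _).add hlogp
  have hloguq : Integrable (fun e => Real.log (u * (1 - p e))) m := by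
    have h : (fun e => Real.log (u * (1 - p e))) = fun e => Real.log u + Real.log (1 - p e) :=
      funext fun e => Real.log_mul hu0.ne' (hq0 e).ne'
    rw [h]; exact (integrable_const _).add hlogq
  have hintup : ∫ e, Real.log (u * p e) ∂m = Real.log u + ∫ e, Real.log (p e) ∂m := by
    have h : (fun e => Real.log (u * p e)) = fun e => Real.log u + Real.log (p e) :=
      funext fun e => Real.log_mul hu0.ne' (hp0 e).ne'
    rw [h, integral_add (integrable_const _) hlogp, integral_const]
    simp
  have hintuq : ∫ e, Real.log (u * (1 - p e)) ∂m
      = Real.log u + ∫ e, Real.log (1 - p e) ∂m := by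
    have h : (fun e => Real.log (u * (1 - p e))) = fun e => Real.log u + Real.log (1 - p e) :=
      funext fun e => Real.log_mul hu0.ne' (hq0 e).ne'
    rw [h, integral_add (integrable_const _) hlogq, integral_const]
    simp
  -- key per-n integral identities
  have hkey : ∀ n, ∫ e, Real.log (f (n+1) e) ∂m
      = ∫ e, Real.log (u * p e) ∂m
        + (∫ e, Real.log (Df n e) ∂m - ∫ e, Real.log (Df (n+1) e) ∂m) := by
    intro n
    have hpt : ∀ e, Real.log (f (n+1) e) + Real.log (Df (n+1) e)
        = Real.log (u * p e) + Real.log (Df n (S.symm e)) := by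
      intro e
      have hmul : f (n+1) e * Df (n+1) e = (u * p e) * Df n (S.symm e) := by
        rw [hfs n e, hDfsucc]
        field_simp [(hGfpos n e).ne']
      calc Real.log (f (n+1) e) + Real.log (Df (n+1) e)
          = Real.log (f (n+1) e * Df (n+1) e) :=
            (Real.log_mul (hfpos _ _).ne' (hDfpos _ _).ne').symm
        _ = Real.log ((u * p e) * Df n (S.symm e)) := by rw [hmul]
        _ = _ := Real.log_mul (mul_pos hu0 (hp0 e)).ne' (hDfpos n (S.symm e)).ne'
    have hL : ∫ e, (Real.log (f (n+1) e) + Real.log (Df (n+1) e)) ∂m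
        = ∫ e, Real.log (f (n+1) e) ∂m + ∫ e, Real.log (Df (n+1) e) ∂m :=
      integral_add (hlogf_int (n+1)) (hlogDf (n+1))
    have hR : ∫ e, (Real.log (u * p e) + Real.log (Df n (S.symm e))) ∂m
        = ∫ e, Real.log (u * p e) ∂m + ∫ e, Real.log (Df n e) ∂m := by
      have hcomp : Integrable (fun e => Real.log (Df n (S.symm e))) m :=
        (hTmp.integrable_comp (Real.measurable_log.comp (hDfm n)).aestronglyMeasurable).mpr (hlogDf n)
      rw [integral_add hlogup hcomp]
      congr 1
      exact hintT (fun e => Real.log (Df n e))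
    have hEq : ∫ e, (Real.log (f (n+1) e) + Real.log (Df (n+1) e)) ∂m
        = ∫ e, (Real.log (u * p e) + Real.log (Df n (S.symm e))) ∂m := by
      simp_rw [hpt]
    rw [hL, hR] at hEq
    linarith
  have hkey' : ∀ n, ∫ e, Real.log (f' (n+1) e) ∂m
      = ∫ e, Real.log (u * (1 - p e)) ∂m
        + (∫ e, Real.log (Df' n e) ∂m - ∫ e, Real.log (Df' (n+1) e) ∂m) := by
    intro n
    have hpt : ∀ e, Real.log (f' (n+1) e) + Real.log (Df' (n+1) e)
        = Real.log (u * (1 - p e)) + Real.log (Df' n (S e)) := by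
      intro e
      have hmul : f' (n+1) e * Df' (n+1) e = (u * (1 - p e)) * Df' n (S e) := by
        rw [hf's n e, hDf'succ]
        field_simp [(hGf'pos n e).ne']
      calc Real.log (f' (n+1) e) + Real.log (Df' (n+1) e)
          = Real.log (f' (n+1) e * Df' (n+1) e) :=
            (Real.log_mul (hf'pos _ _).ne' (hDf'pos _ _).ne').symm
        _ = Real.log ((u * (1 - p e)) * Df' n (S e)) := by rw [hmul]
        _ = _ := Real.log_mul (mul_pos hu0 (hq0 e)).ne' (hDf'pos n (S e)).ne'
    have hL : ∫ e, (Real.log (f' (n+1) e) + Real.log (Df' (n+1) e)) ∂m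
        = ∫ e, Real.log (f' (n+1) e) ∂m + ∫ e, Real.log (Df' (n+1) e) ∂m :=
      integral_add (hlogf'_int (n+1)) (hlogDf' (n+1))
    have hR : ∫ e, (Real.log (u * (1 - p e)) + Real.log (Df' n (S e))) ∂m
        = ∫ e, Real.log (u * (1 - p e)) ∂m + ∫ e, Real.log (Df' n e) ∂m := by
      have hcomp : Integrable (fun e => Real.log (Df' n (S e))) m :=
        (hSmp.integrable_comp (Real.measurable_log.comp (hDf'm n)).aestronglyMeasurable).mpr (hlogDf' n)
      rw [integral_add hloguq hcomp]
      congr 1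
      exact hintS (fun e => Real.log (Df' n e))
    have hEq : ∫ e, (Real.log (f' (n+1) e) + Real.log (Df' (n+1) e)) ∂m
        = ∫ e, (Real.log (u * (1 - p e)) + Real.log (Df' n (S e))) ∂m := by
      simp_rw [hpt]
    rw [hL, hR] at hEq
    linarith
  -- continued fraction representation and reversal
  set c1 : E → ℝ := fun e => u * (1 - p e) * (u * p (S.symm e)) with hc1
  set c2 : E → ℝ := fun e => u * p e * (u * (1 - p (S e))) with hc2
  have hKf : ∀ n e, Df n e = Stmt4Aux.Kc (Stmt4Aux.LL (⇑S.symm) c1 n e) := by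
    intro n e
    exact Stmt4Aux.DD_eq_Kc (⇑S.symm) (fun e => u * p e) (fun e => u * (1 - p e)) f
      hf0 hfs (fun n e => (hGfpos n e).ne') n e
  have hKf' : ∀ n e, Df' n e = Stmt4Aux.Kc (Stmt4Aux.LL (⇑S) c2 n e) := by
    intro n e
    exact Stmt4Aux.DD_eq_Kc (⇑S) (fun e => u * (1 - p e)) (fun e => u * p e) f'
      hf'0 hf's (fun n e => (hGf'pos n e).ne') n e
  have hrevL : ∀ n e, (Stmt4Aux.LL (⇑S.symm) c1 n e).reverse
      = Stmt4Aux.LL (⇑S) c2 n ((⇑S.symm)^[n] e) := by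
    intro n
    induction n with
    | zero => intro e; simp [Stmt4Aux.LL]
    | succ n ih =>
      intro e
      have hSTn : S ((⇑S.symm)^[n+1] e) = (⇑S.symm)^[n] e := by
        rw [Function.iterate_succ_apply']
        exact S.apply_symm_apply _
      have hc : c1 ((⇑S.symm)^[n] e) = c2 ((⇑S.symm)^[n+1] e) := by
        simp only [hc1, hc2]
        rw [hSTn, Function.iterate_succ_apply']
        ring
      have e1 : (Stmt4Aux.LL (⇑S.symm) c1 (n+1) e).reverse
          = c1 ((⇑S.symm)^[n] e) :: (Stmt4Aux.LL (⇑S.symm) c1 n e).reverse := by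
        rw [Stmt4Aux.LL_succ']; simp
      have e2 : Stmt4Aux.LL (⇑S) c2 (n+1) ((⇑S.symm)^[n+1] e)
          = c2 ((⇑S.symm)^[n+1] e) :: Stmt4Aux.LL (⇑S) c2 n ((⇑S.symm)^[n] e) := by
        rw [Stmt4Aux.LL_succ, hSTn]
      rw [e1, e2, ih e, hc]
  have hDrev : ∀ n, ∫ e, Real.log (Df n e) ∂m = ∫ e, Real.log (Df' n e) ∂m := by
    intro n
    have hpt : ∀ e, Real.log (Df n e) = Real.log (Df' n ((⇑S.symm)^[n] e)) := by
      intro e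
      rw [hKf n e, ← Stmt4Aux.Kc_reverse, hrevL n e, ← hKf' n ((⇑S.symm)^[n] e)]
    calc ∫ e, Real.log (Df n e) ∂m
        = ∫ e, Real.log (Df' n ((⇑S.symm)^[n] e)) ∂m := by simp_rw [hpt]
      _ = ∫ e, Real.log (Df' n e) ∂m := hintTn (fun e => Real.log (Df' n e)) n
  -- per-n identity
  have Ieq : ∀ n : ℕ, ∫ e, Real.log (f (n+1) e) ∂m
      = ∫ e, Real.log (f' (n+1) e) ∂m
        + (∫ e, Real.log (p e) ∂m - ∫ e, Real.log (1 - p e) ∂m) := by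
    intro n
    have h1 := hkey n
    have h2 := hkey' n
    have h3 := hDrev n
    have h4 := hDrev (n+1)
    rw [hintup] at h1
    rw [hintuq] at h2
    linarith
  -- limits
  have hFb : ∀ e, u * p e ≤ F e ∧ F e ≤ u := fun e =>
    ⟨ge_of_tendsto (hF e) (Eventually.of_forall fun n => (hfb n e).1),
     le_of_tendsto (hF e) (Eventually.of_forall fun n => (hfb n e).2)⟩
  have hF'b : ∀ e, u * (1 - p e) ≤ F' e ∧ F' e ≤ u := fun e =>
    ⟨ge_of_tendsto (hF' e) (Eventually.of_forall fun n => (hf'b n e).1),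
     le_of_tendsto (hF' e) (Eventually.of_forall fun n => (hf'b n e).2)⟩
  have hFpos : ∀ e, 0 < F e := fun e =>
    lt_of_lt_of_le (mul_pos hu0 (hp0 e)) (hFb e).1
  have hF'pos : ∀ e, 0 < F' e := fun e =>
    lt_of_lt_of_le (mul_pos hu0 (hq0 e)) (hF'b e).1
  have hFmeas : Measurable F :=
    measurable_of_tendsto_metrizable hfm (tendsto_pi_nhds.2 hF)
  have hF'meas : Measurable F' :=
    measurable_of_tendsto_metrizable hf'm (tendsto_pi_nhds.2 hF')
  have hlogF_int : Integrable (fun e => Real.log (F e)) m := by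
    apply Integrable.mono' hboundp
    · exact (Real.measurable_log.comp hFmeas).aestronglyMeasurable
    · exact Eventually.of_forall fun e => hlogbound (F e) e (hFb e).1 (hFb e).2
  have hlogF'_int : Integrable (fun e => Real.log (F' e)) m := by
    apply Integrable.mono' hboundq
    · exact (Real.measurable_log.comp hF'meas).aestronglyMeasurable
    · exact Eventually.of_forall fun e => hlogbound' (F' e) e (hF'b e).1 (hF'b e).2
  have htendF : Tendsto (fun n => ∫ e, Real.log (f n e) ∂m) atTop
      (𝓝 (∫ e, Real.log (F e) ∂m)) := by
    apply tendsto_integral_of_dominated_convergence (fun e => |Real.log u| + |Real.log (p e)|)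
      (fun n => (Real.measurable_log.comp (hfm n)).aestronglyMeasurable) hboundp
    · intro n
      exact Eventually.of_forall fun e => hlogbound (f n e) e (hfb n e).1 (hfb n e).2
    · exact Eventually.of_forall fun e =>
        ((Real.continuousAt_log (hFpos e).ne').tendsto).comp (hF e)
  have htendF' : Tendsto (fun n => ∫ e, Real.log (f' n e) ∂m) atTop
      (𝓝 (∫ e, Real.log (F' e) ∂m)) := by
    apply tendsto_integral_of_dominated_convergence (fun e => |Real.log u| + |Real.log (1 - p e)|)
      (fun n => (Real.measurable_log.comp (hf'm n)).aestronglyMeasurable) hboundq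
    · intro n
      exact Eventually.of_forall fun e => hlogbound' (f' n e) e (hf'b n e).1 (hf'b n e).2
    · exact Eventually.of_forall fun e =>
        ((Real.continuousAt_log (hF'pos e).ne').tendsto).comp (hF' e)
  have ht1 : Tendsto (fun n : ℕ => ∫ e, Real.log (f (n+1) e) ∂m) atTop
      (𝓝 (∫ e, Real.log (F e) ∂m)) := htendF.comp (tendsto_add_atTop_nat 1)
  have ht2 : Tendsto (fun n : ℕ => ∫ e, Real.log (f' (n+1) e) ∂m) atTop
      (𝓝 (∫ e, Real.log (F' e) ∂m)) := htendF'.comp (tendsto_add_atTop_nat 1)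
  have ht3 : Tendsto (fun n : ℕ => ∫ e, Real.log (f (n+1) e) ∂m) atTop
      (𝓝 (∫ e, Real.log (F' e) ∂m
        + (∫ e, Real.log (p e) ∂m - ∫ e, Real.log (1 - p e) ∂m))) := by
    have h : (fun n : ℕ => ∫ e, Real.log (f (n+1) e) ∂m)
        = fun n : ℕ => ∫ e, Real.log (f' (n+1) e) ∂m
          + (∫ e, Real.log (p e) ∂m - ∫ e, Real.log (1 - p e) ∂m) := funext Ieq
    rw [h]
    exact ht2.add_const _
  have hfinal : ∫ e, Real.log (F e) ∂m = ∫ e, Real.log (F' e) ∂m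
      + (∫ e, Real.log (p e) ∂m - ∫ e, Real.log (1 - p e) ∂m) :=
    tendsto_nhds_unique ht1 ht3
  have hpq : ∫ e, Real.log (p e / (1 - p e)) ∂m
      = ∫ e, Real.log (p e) ∂m - ∫ e, Real.log (1 - p e) ∂m := by
    have h : (fun e => Real.log (p e / (1 - p e)))
        = fun e => Real.log (p e) - Real.log (1 - p e) :=
      funext fun e => Real.log_div (hp0 e).ne' (hq0 e).ne'
    rw [h]
    exact integral_sub hlogp hlogq
  exact ⟨hlogF_int, hlogF'_int, by rw [hpq]; exact hfinal⟩
end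

section
/- For every integer n ≥ 0 and every e ∈ E, x[n](e) equals the finite continued fraction [r(0)(e), r(1)(e), …, r(n)(e)], and x'[n](e) equals [r'(0)(e), r'(1)(e), …, r'(n)(e)]. -/
/-- The finite continued fraction `[s 0, s 1, …, s n]`, defined by
`[s n] = s n` and `[s 0, …, s n] = s 0 + 1/[s 1, …, s n]`. -/
noncomputable def contFrac : ℕ → (ℕ → ℝ) → ℝ
  | 0, s => s 0
  | n + 1, s => s 0 + 1 / contFrac n (fun k => s (k + 1))

lemma cf_scale : ∀ (n : ℕ) (t : ℕ → ℝ) (l : ℝ), l ≠ 0 →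
    contFrac n (fun k => if Even k then l * t k else t k / l) = l * contFrac n t := by
  intro n
  induction n with
  | zero => intro t l hl; simp [contFrac]
  | succ n ih =>
    intro t l hl
    show (if Even 0 then l * t 0 else t 0 / l) +
        1 / contFrac n (fun k => if Even (k + 1) then l * t (k + 1) else t (k + 1) / l)
      = l * (t 0 + 1 / contFrac n (fun k => t (k + 1)))
    have h1 : (fun k => if Even (k + 1) then l * t (k + 1) else t (k + 1) / l)
        = (fun k => if Even k then (1 / l) * t (k + 1) else t (k + 1) / (1 / l)) := by
      funext k
      by_cases hk : Even k
      · simp [hk, Nat.even_add_one]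
        rw [div_eq_mul_inv, mul_comm]
      · simp [hk, Nat.even_add_one]
        rw [mul_comm]
    rw [h1, ih _ _ (one_div_ne_zero hl)]
    set C := contFrac n (fun k => t (k + 1)) with hC
    rw [if_pos (Even.zero)]
    have h2 : 1 / (1 / l * C) = l * (1 / C) := by
      rw [one_div, one_div, one_div, mul_inv, inv_inv]
    rw [h2]; ring

lemma key {E : Type*} (T : E → E) (c : E → ℝ) (hc : ∀ e, 0 < c e)
    (r : ℕ → E → ℝ)
    (hr0 : ∀ e, r 0 e = c e)
    (hrs : ∀ n e, r (n + 1) e = c (T^[n + 1] e) / r n e)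
    (x : ℕ → E → ℝ)
    (hx0 : ∀ e, x 0 e = c e)
    (hxs : ∀ n e, x (n + 1) e = c e * (1 + 1 / x n (T e))) :
    ∀ (n : ℕ) (e : E), x n e = contFrac n (fun k => r k e) := by
  have rpos : ∀ k e, 0 < r k e := by
    intro k
    induction k with
    | zero => intro e; rw [hr0]; exact hc e
    | succ k ih => intro e; rw [hrs]; exact div_pos (hc _) (ih e)
  have rshift : ∀ k e, r (k + 1) e =
      if Even k then r k (T e) / c e else r k (T e) * c e := by
    intro k
    induction k with
    | zero =>
      intro e
      rw [if_pos Even.zero, hrs, hr0, hr0, Function.iterate_one]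
    | succ k ih =>
      intro e
      have hiter : T^[k + 1 + 1] e = T^[k + 1] (T e) := by
        rw [Function.iterate_succ_apply]
      have hr1 : r (k + 1) (T e) = c (T^[k + 1 + 1] e) / r k (T e) := by
        rw [hrs, hiter]
      have hne : r k (T e) ≠ 0 := (rpos k (T e)).ne'
      have hce : c e ≠ 0 := (hc e).ne'
      by_cases hk : Even k
      · rw [if_neg (by simpa [Nat.even_add_one] using hk)]
        rw [hrs, ih e, if_pos hk, hr1]
        field_simp
      · rw [if_pos (by simpa [Nat.even_add_one] using hk)]
        rw [hrs, ih e, if_neg hk, hr1]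
        field_simp
  intro n
  induction n with
  | zero => intro e; rw [hx0]; exact (hr0 e).symm
  | succ n ih =>
    intro e
    rw [hxs]
    show c e * (1 + 1 / x n (T e)) = r 0 e + 1 / contFrac n (fun k => r (k + 1) e)
    have h1 : (fun k => r (k + 1) e)
        = (fun k => if Even k then (1 / c e) * r k (T e) else r k (T e) / (1 / c e)) := by
      funext k
      rw [rshift]
      by_cases hk : Even k
      · simp [hk]; rw [div_eq_mul_inv, mul_comm]
      · simp [hk]
    rw [h1, cf_scale n _ _ (one_div_ne_zero (hc e).ne'), ← ih (T e)]
    set X := x n (T e)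
    rw [hr0]
    have h2 : 1 / (1 / c e * X) = c e * (1 / X) := by
      rw [one_div, one_div, one_div, mul_inv, inv_inv]
    rw [h2]; ring

theorem stmt_6 {E : Type*} (S : E ≃ E) (c : E → ℝ) (hc : ∀ e, 0 < c e)
    (r r' : ℕ → E → ℝ)
    (hr0 : ∀ e, r 0 e = c e)
    (hrs : ∀ n e, r (n + 1) e = c ((⇑S.symm)^[n + 1] e) / r n e)
    (hr'0 : ∀ e, r' 0 e = c e)
    (hr's : ∀ n e, r' (n + 1) e = c ((⇑S)^[n + 1] e) / r' n e)
    (x x' : ℕ → E → ℝ)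
    (hx0 : ∀ e, x 0 e = c e)
    (hxs : ∀ n e, x (n + 1) e = c e * (1 + 1 / x n (S.symm e)))
    (hx'0 : ∀ e, x' 0 e = c e)
    (hx's : ∀ n e, x' (n + 1) e = c e * (1 + 1 / x' n (S e))) :
    ∀ (n : ℕ) (e : E),
      x n e = contFrac n (fun k => r k e) ∧
      x' n e = contFrac n (fun k => r' k e) := by
  intro n e
  exact ⟨key (⇑S.symm) c hc r hr0 hrs x hx0 hxs n e,
    key (⇑S) c hc r' hr'0 hr's x' hx'0 hx's n e⟩
end

section
/- For every integer n ≥ 1 the pointwise identity x'[n−1] · (x[n]∘S^{n+1}) = x'[n] · (x[n−1]∘S^{n+1}) holds on E. -/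
private def gaux {E : Type*} (S : E → E) (c : E → ℝ) : ℕ → E → ℝ
  | 0, _ => 1
  | 1, e => c e + 1
  | (n+2), e => c (S^[n+1] e) * gaux S c (n+1) e + c (S^[n] e) * gaux S c n e

private lemma gaux_pos {E : Type*} (S : E → E) (c : E → ℝ) (hc : ∀ e, 0 < c e) :
    ∀ n e, 0 < gaux S c n e
  | 0, e => by simp [gaux]
  | 1, e => by have := hc e; simp [gaux]; linarith
  | (n+2), e => by
      have h1 := gaux_pos S c hc (n+1) e
      have h0 := gaux_pos S c hc n e
      have p1 := hc (S^[n+1] e)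
      have p0 := hc (S^[n] e)
      simp only [gaux]
      positivity

private lemma gaux_rev {E : Type*} (S : E → E) (c : E → ℝ) :
    ∀ n e, gaux S c (n+2) e
      = c e * gaux S c (n+1) (S e) + c (S e) * gaux S c n (S (S e))
  | 0, e => by
      simp [gaux, Function.iterate_succ_apply]; ring
  | 1, e => by
      simp [gaux, Function.iterate_succ_apply]; ring
  | (n+2), e => by
      have h1 := gaux_rev S c (n+1) e
      have h0 := gaux_rev S c n e
      have e3 : S^[n+3] e = S^[n+2] (S e) := by
        simp [Function.iterate_succ_apply]
      have e3' : S^[n+3] e = S^[n+1] (S (S e)) := by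
        simp [Function.iterate_succ_apply]
      have e2 : S^[n+2] e = S^[n+1] (S e) := by
        simp [Function.iterate_succ_apply]
      have e2' : S^[n+2] e = S^[n] (S (S e)) := by
        simp [Function.iterate_succ_apply]
      show c (S^[n+3] e) * gaux S c (n+3) e + c (S^[n+2] e) * gaux S c (n+2) e = _
      rw [h1, h0]
      show _ = c e * (c (S^[n+2] (S e)) * gaux S c (n+2) (S e)
            + c (S^[n+1] (S e)) * gaux S c (n+1) (S e))
          + c (S e) * (c (S^[n+1] (S (S e))) * gaux S c (n+1) (S (S e))
            + c (S^[n] (S (S e))) * gaux S c n (S (S e)))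
      rw [← e3, ← e3', ← e2, ← e2']
      ring

private lemma frac_step (c3 c2 c1 g1 g0 : ℝ) (h2 : c2 ≠ 0) (h1 : c1 ≠ 0)
    (hg1 : g1 ≠ 0) (hg0 : g0 ≠ 0) :
    c3 * (1 + 1 / (c2 * g1 / (c1 * g0))) = c3 * (c2 * g1 + c1 * g0) / (c2 * g1) := by
  field_simp

private lemma final_alg (c0 cs c2 c3 g1 g2 h0 h1 : ℝ) (hcs : cs ≠ 0) (hc2 : c2 ≠ 0)
    (hg1 : g1 ≠ 0) (hh0 : h0 ≠ 0) (hh1 : h1 ≠ 0) :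
    (c0 * g1 / (cs * h0)) * (c3 * g2 / (c2 * g1))
      = (c0 * g2 / (cs * h1)) * (c3 * h1 / (c2 * h0)) := by
  field_simp

theorem stmt_8 {E : Type*} (S : E ≃ E) (c : E → ℝ) (hc : ∀ e, 0 < c e)
    (x x' : ℕ → E → ℝ)
    (hx0 : ∀ e, x 0 e = c e)
    (hxs : ∀ n e, x (n + 1) e = c e * (1 + 1 / x n (S.symm e)))
    (hx'0 : ∀ e, x' 0 e = c e)
    (hx's : ∀ n e, x' (n + 1) e = c e * (1 + 1 / x' n (S e))) :
    ∀ n : ℕ, 1 ≤ n → ∀ e : E,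
      x' (n - 1) e * x n ((⇑S)^[n + 1] e) =
        x' n e * x (n - 1) ((⇑S)^[n + 1] e) := by
  have gpos := gaux_pos (⇑S) c hc
  -- formula for x
  have xform : ∀ n e, x (n+1) ((⇑S)^[n+2] e)
      = c ((⇑S)^[n+2] e) * gaux (⇑S) c (n+1) (S e)
        / (c ((⇑S)^[n+1] e) * gaux (⇑S) c n (S e)) := by
    intro n
    induction n with
    | zero =>
        intro e
        have hsymm : S.symm ((⇑S)^[2] e) = (⇑S)^[1] e := by
          simp [Function.iterate_succ_apply']
        have h1 : (⇑S)^[1] e = S e := rfl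
        rw [hxs, hsymm, h1, hx0]
        have hne := (hc (S e)).ne'
        simp only [gaux]
        rw [mul_one, show c ((⇑S)^[2] e) * (c (S e) + 1) / c (S e)
              = c ((⇑S)^[2] e) * ((c (S e) + 1) / c (S e)) by ring]
        congr 1
        field_simp
    | succ n ih =>
        intro e
        have hsymm : S.symm ((⇑S)^[n+3] e) = (⇑S)^[n+2] e := by
          rw [Function.iterate_succ_apply']
          exact S.symm_apply_apply _
        rw [hxs, hsymm, ih e,
          frac_step _ _ _ _ _ (hc ((⇑S)^[n+2] e)).ne' (hc ((⇑S)^[n+1] e)).ne'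
            (gpos (n+1) (S e)).ne' (gpos n (S e)).ne']
        have hg2 : gaux (⇑S) c (n+2) (S e)
            = c ((⇑S)^[n+1] (S e)) * gaux (⇑S) c (n+1) (S e)
              + c ((⇑S)^[n] (S e)) * gaux (⇑S) c n (S e) := rfl
        have i1 : (⇑S)^[n+1] (S e) = (⇑S)^[n+2] e := by
          simp [Function.iterate_succ_apply]
        have i0 : (⇑S)^[n] (S e) = (⇑S)^[n+1] e := by
          simp [Function.iterate_succ_apply]
        rw [i1, i0] at hg2
        rw [← hg2]
  -- formula for x'
  have x'form : ∀ n e, x' (n+1) e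
      = c e * gaux (⇑S) c (n+1) (S e) / (c (S e) * gaux (⇑S) c n (S (S e))) := by
    intro n
    induction n with
    | zero =>
        intro e
        rw [hx's, hx'0]
        have hne := (hc (S e)).ne'
        simp only [gaux]
        rw [mul_one, show c e * (c (S e) + 1) / c (S e)
              = c e * ((c (S e) + 1) / c (S e)) by ring]
        congr 1
        field_simp
    | succ n ih =>
        intro e
        rw [hx's, ih (S e),
          frac_step _ _ _ _ _ (hc (S e)).ne' (hc (S (S e))).ne'
            (gpos (n+1) (S (S e))).ne' (gpos n (S (S (S e)))).ne',
          ← gaux_rev (⇑S) c n (S e)]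
  -- main statement
  intro n hn e
  obtain ⟨m, rfl⟩ : ∃ m, n = m + 1 := ⟨n - 1, (Nat.succ_pred_eq_of_pos hn).symm⟩
  simp only [Nat.add_sub_cancel]
  match m with
  | 0 =>
      have hsymm : S.symm ((⇑S)^[2] e) = S e := by
        simp [Function.iterate_succ_apply']
      rw [hx'0, hx0, hxs, hsymm, hx0, hx's, hx'0]
      ring
  | (k+1) =>
      show x' (k+1) e * x (k+2) ((⇑S)^[k+3] e) = x' (k+2) e * x (k+1) ((⇑S)^[k+3] e)
      have key1 : x' (k+1) e
          = c e * gaux (⇑S) c (k+1) (S e) / (c (S e) * gaux (⇑S) c k (S (S e))) :=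
        x'form k e
      have key2 : x' (k+2) e
          = c e * gaux (⇑S) c (k+2) (S e) / (c (S e) * gaux (⇑S) c (k+1) (S (S e))) :=
        x'form (k+1) e
      have key3 : x (k+2) ((⇑S)^[k+3] e)
          = c ((⇑S)^[k+3] e) * gaux (⇑S) c (k+2) (S e)
            / (c ((⇑S)^[k+2] e) * gaux (⇑S) c (k+1) (S e)) :=
        xform (k+1) e
      have key4' : x (k+1) ((⇑S)^[k+2] (S e))
          = c ((⇑S)^[k+2] (S e)) * gaux (⇑S) c (k+1) (S (S e))
            / (c ((⇑S)^[k+1] (S e)) * gaux (⇑S) c k (S (S e))) :=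
        xform k (S e)
      have i1 : (⇑S)^[k+2] (S e) = (⇑S)^[k+3] e := by
        simp [Function.iterate_succ_apply]
      have i2 : (⇑S)^[k+1] (S e) = (⇑S)^[k+2] e := by
        simp [Function.iterate_succ_apply]
      rw [i1, i2] at key4'
      rw [key1, key2, key3, key4']
      exact final_alg _ _ _ _ _ _ _ _ (hc (S e)).ne' (hc ((⇑S)^[k+2] e)).ne'
        (gpos (k+1) (S e)).ne' (gpos k (S (S e))).ne' (gpos (k+1) (S (S e))).ne'
end

section
/- For every integer n ≥ 0 the pointwise identity c · (x[n]∘S^{n+2}) · ∏_{k=1}^{n} (x[k]∘S^{k+1}) = (c∘S²) · x'[n] · ∏_{k=1}^{n} (x[k]∘S^{k+2}) holds on E. -/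
/-!
Both continued fractions are ratios of continuants taken along the orbit of `S`. The continuant
`K n e` of `c e, c (S e), …, c (S^[n-1] e)` obeys the same three-term recursion whether it is
expanded from the left or from the right end of the orbit segment; expanding from the left gives
`x' (n+1) e = c e K_{n+1} (S e) / (c (S e) K_n (S² e))`, expanding from the right gives
`x (n+1) (S^[n+1] e) = c (S^[n+1] e) K_{n+1} e / (c (S^[n] e) K_n e)`.
The latter makes `∏_{k=1}^n x k (S^[k] e)` telescope to `c (S^[n] e) K_n e / c e`, after which
both sides of the identity are the same product of continuants and values of `c`.
-/

section

variable {E : Type*} (f : E → E) (c : E → ℝ)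

noncomputable def orbitContinuant : ℕ → E → ℝ
  | 0, _ => 1
  | 1, e => c e + 1
  | n + 2, e => c e * orbitContinuant (n + 1) (f e) + c (f e) * orbitContinuant n (f (f e))

local notation "K" => orbitContinuant f c

theorem orbitContinuant_pos (hc : ∀ e, 0 < c e) : ∀ n e, 0 < K n e := by
  intro n
  induction n using Nat.twoStepInduction with
  | zero => intro e; simp [orbitContinuant]
  | one => intro e; have := hc e; simp only [orbitContinuant]; positivity
  | more n ih₀ ih₁ =>
    intro e
    have := hc e; have := hc (f e); have := ih₀ (f (f e)); have := ih₁ (f e)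
    simp only [orbitContinuant]
    positivity

theorem orbitContinuant_add_two_right :
    ∀ n e, K (n + 2) e = c (f^[n + 1] e) * K (n + 1) e + c (f^[n] e) * K n e := by
  intro n
  induction n using Nat.twoStepInduction with
  | zero => intro e; simp [orbitContinuant]; ring
  | one => intro e; simp [orbitContinuant]; ring
  | more n ih₀ ih₁ =>
    intro e
    have h₁ := ih₁ (f e)
    have h₀ := ih₀ (f (f e))
    simp only [← Function.iterate_succ_apply] at h₀ h₁
    rw [orbitContinuant, h₁, h₀]
    simp only [orbitContinuant]
    ring

theorem forward_rec_eq_orbitContinuant_ratio (hc : ∀ e, 0 < c e) (y : ℕ → E → ℝ)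
    (hy0 : ∀ e, y 0 e = c e) (hys : ∀ n e, y (n + 1) e = c e * (1 + 1 / y n (f e))) :
    ∀ n e, y (n + 1) e = c e * K (n + 1) (f e) / (c (f e) * K n (f (f e))) := by
  intro n
  induction n with
  | zero =>
    intro e
    have := (hc (f e)).ne'
    rw [hys, hy0]
    simp only [orbitContinuant]
    field_simp
  | succ n ih =>
    intro e
    have := (hc (f e)).ne'
    have := (orbitContinuant_pos f c hc (n + 1) (f (f e))).ne'
    rw [hys, ih]
    simp only [orbitContinuant]
    field_simp

end

theorem backward_rec_eq_orbitContinuant_ratio {E : Type*} (S : E ≃ E) {c : E → ℝ}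
    (hc : ∀ e, 0 < c e) (z : ℕ → E → ℝ) (hz0 : ∀ e, z 0 e = c e)
    (hzs : ∀ n e, z (n + 1) e = c e * (1 + 1 / z n (S.symm e))) :
    ∀ n e, z (n + 1) (S^[n + 1] e) =
      c (S^[n + 1] e) * orbitContinuant S c (n + 1) e /
        (c (S^[n] e) * orbitContinuant S c n e) := by
  intro n
  induction n with
  | zero =>
    intro e
    have := (hc e).ne'
    simp only [zero_add, Function.iterate_one, Function.iterate_zero_apply, hzs, hz0,
      Equiv.symm_apply_apply, orbitContinuant]
    field_simp
  | succ n ih =>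
    intro e
    have := (hc (S^[n + 1] e)).ne'
    have := (orbitContinuant_pos S c hc (n + 1) e).ne'
    rw [hzs, Function.iterate_succ_apply' _ (n + 1), Equiv.symm_apply_apply, ih,
      orbitContinuant_add_two_right]
    field_simp

theorem prod_Icc_backward_rec_eq_orbitContinuant {E : Type*} (S : E ≃ E) {c : E → ℝ}
    (hc : ∀ e, 0 < c e) (z : ℕ → E → ℝ) (hz0 : ∀ e, z 0 e = c e)
    (hzs : ∀ n e, z (n + 1) e = c e * (1 + 1 / z n (S.symm e))) (n : ℕ) (e : E) :
    ∏ k ∈ Finset.Icc 1 n, z k (S^[k] e) = c (S^[n] e) * orbitContinuant S c n e / c e := by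
  induction n with
  | zero => simp [orbitContinuant, (hc e).ne']
  | succ n ih =>
    have := (hc (S^[n] e)).ne'
    have := (orbitContinuant_pos S c hc n e).ne'
    rw [Finset.prod_Icc_succ_top (by omega), ih,
      backward_rec_eq_orbitContinuant_ratio S hc z hz0 hzs]
    field_simp

theorem stmt_9 {E : Type*} (S : E ≃ E) (c : E → ℝ) (hc : ∀ e, 0 < c e)
    (x x' : ℕ → E → ℝ)
    (hx0 : ∀ e, x 0 e = c e)
    (hxs : ∀ n e, x (n + 1) e = c e * (1 + 1 / x n (S.symm e)))
    (hx'0 : ∀ e, x' 0 e = c e)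
    (hx's : ∀ n e, x' (n + 1) e = c e * (1 + 1 / x' n (S e))) :
    ∀ (n : ℕ) (e : E),
      c e * x n ((⇑S)^[n + 2] e) * ∏ k ∈ Finset.Icc 1 n, x k ((⇑S)^[k + 1] e) =
        c (S (S e)) * x' n e * ∏ k ∈ Finset.Icc 1 n, x k ((⇑S)^[k + 2] e) := by
  intro n e
  simp only [Function.iterate_succ_apply]
  rw [prod_Icc_backward_rec_eq_orbitContinuant S hc x hx0 hxs,
    prod_Icc_backward_rec_eq_orbitContinuant S hc x hx0 hxs]
  cases n with
  | zero => simp [hx0, hx'0, orbitContinuant, (hc (S e)).ne', (hc (S (S e))).ne', mul_comm]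
  | succ n =>
    rw [backward_rec_eq_orbitContinuant_ratio S hc x hx0 hxs,
      forward_rec_eq_orbitContinuant_ratio S c hc x' hx'0 hx's]
    have := (hc (S e)).ne'
    have := (hc (S (S e))).ne'
    have := (hc (S^[n] (S (S e)))).ne'
    have := (orbitContinuant_pos S c hc n (S (S e))).ne'
    rw [Function.iterate_succ_apply S n (S e)]
    field_simp
end

section
/- If log c is m-integrable, then the function log(1 + c∘S⁻¹) is m-integrable, and for every integer n ≥ 0 the functions log x[n] and log x'[n] are m-integrable. -/
open MeasureTheory

lemma log_one_add_abs_le {a : ℝ} (ha : 0 < a) :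
    |Real.log (1 + a)| ≤ Real.log 2 + |Real.log a| := by
  have h1 : (0:ℝ) ≤ Real.log (1 + a) :=
    Real.log_nonneg (by linarith)
  rw [abs_of_nonneg h1]
  rcases le_or_gt a 1 with h | h
  · have : Real.log (1 + a) ≤ Real.log 2 :=
      Real.log_le_log (by linarith) (by linarith)
    have := abs_nonneg (Real.log a)
    linarith
  · have : Real.log (1 + a) ≤ Real.log (2 * a) :=
      Real.log_le_log (by linarith) (by linarith)
    rw [Real.log_mul (by norm_num) (ne_of_gt (by linarith))] at this
    have := le_abs_self (Real.log a)
    linarith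

lemma log_one_add_div_le {a x : ℝ} (ha : 0 < a) (hax : a ≤ x) :
    |Real.log (1 + 1 / x)| ≤ Real.log (1 + a) - Real.log a := by
  have hx : 0 < x := lt_of_lt_of_le ha hax
  have h0 : (0:ℝ) < 1 / x := by positivity
  rw [abs_of_nonneg (Real.log_nonneg (by linarith))]
  have h1 : 1 + 1 / x ≤ 1 + 1 / a := by
    have := one_div_le_one_div_of_le ha hax
    linarith
  have h2 : Real.log (1 + 1 / x) ≤ Real.log (1 + 1 / a) :=
    Real.log_le_log (by linarith) h1
  have h3 : (1 : ℝ) + 1 / a = (1 + a) / a := by field_simp; ring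
  rw [h3, Real.log_div (by positivity) (ne_of_gt ha)] at h2
  exact h2

theorem stmt_10 {E : Type*} [MeasurableSpace E] (m : Measure E)
    [IsProbabilityMeasure m]
    (S : E ≃ E) (hS : MeasurePreserving S m m) (hSsymm : Measurable ⇑S.symm)
    (c : E → ℝ) (hcm : Measurable c) (hc : ∀ e, 0 < c e)
    (x x' : ℕ → E → ℝ)
    (hx0 : ∀ e, x 0 e = c e)
    (hxs : ∀ n e, x (n + 1) e = c e * (1 + 1 / x n (S.symm e)))
    (hx'0 : ∀ e, x' 0 e = c e)
    (hx's : ∀ n e, x' (n + 1) e = c e * (1 + 1 / x' n (S e)))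
    (hlogc : Integrable (fun e => Real.log (c e)) m) :
    Integrable (fun e => Real.log (1 + c (S.symm e))) m ∧
      ∀ n : ℕ, Integrable (fun e => Real.log (x n e)) m ∧
        Integrable (fun e => Real.log (x' n e)) m := by
  -- S.symm is measure preserving
  have hS2 : MeasurePreserving S.symm m m := by
    refine ⟨hSsymm, ?_⟩
    have h := hS.map_eq
    conv_lhs => rw [← h]
    rw [Measure.map_map hSsymm hS.measurable]
    simp [Function.comp]
  -- integrability of log (1 + c)
  have h1 : Integrable (fun e => Real.log (1 + c e)) m := by
    refine Integrable.mono' ((integrable_const (Real.log 2)).add hlogc.abs)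
      ((measurable_const.add hcm).log.aestronglyMeasurable) ?_
    filter_upwards with e
    simpa using log_one_add_abs_le (hc e)
  have h1symm : Integrable (fun e => Real.log (1 + c (S.symm e))) m :=
    (hS2.integrable_comp h1.aestronglyMeasurable).mpr h1
  have h1S : Integrable (fun e => Real.log (1 + c (S e))) m :=
    (hS.integrable_comp h1.aestronglyMeasurable).mpr h1
  have hlogcsymm : Integrable (fun e => Real.log (c (S.symm e))) m :=
    (hS2.integrable_comp hlogc.aestronglyMeasurable).mpr hlogc
  have hlogcS : Integrable (fun e => Real.log (c (S e))) m :=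
    (hS.integrable_comp hlogc.aestronglyMeasurable).mpr hlogc
  -- lower bounds and measurability of x n, x' n
  have hxb : ∀ n e, c e ≤ x n e := by
    intro n
    induction n with
    | zero => intro e; rw [hx0]
    | succ n ih =>
      intro e
      rw [hxs]
      have hpos : 0 < x n (S.symm e) := lt_of_lt_of_le (hc _) (ih _)
      have : (0:ℝ) < 1 / x n (S.symm e) := by positivity
      nlinarith [hc e]
  have hx'b : ∀ n e, c e ≤ x' n e := by
    intro n
    induction n with
    | zero => intro e; rw [hx'0]
    | succ n ih =>
      intro e
      rw [hx's]
      have hpos : 0 < x' n (S e) := lt_of_lt_of_le (hc _) (ih _)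
      have : (0:ℝ) < 1 / x' n (S e) := by positivity
      nlinarith [hc e]
  have hxm : ∀ n, Measurable (x n) := by
    intro n
    induction n with
    | zero => simpa [funext (hx0)] using hcm
    | succ n ih =>
      have : x (n + 1) = fun e => c e * (1 + 1 / x n (S.symm e)) :=
        funext (hxs n)
      rw [this]
      exact hcm.mul (measurable_const.add ((ih.comp hSsymm).const_div 1))
  have hx'm : ∀ n, Measurable (x' n) := by
    intro n
    induction n with
    | zero => simpa [funext (hx'0)] using hcm
    | succ n ih =>
      have : x' (n + 1) = fun e => c e * (1 + 1 / x' n (S e)) :=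
        funext (hx's n)
      rw [this]
      exact hcm.mul (measurable_const.add ((ih.comp hS.measurable).const_div 1))
  refine ⟨h1symm, ?_⟩
  intro n
  induction n with
  | zero =>
    constructor
    · simpa [funext (hx0)] using hlogc
    · simpa [funext (hx'0)] using hlogc
  | succ n ih =>
    constructor
    · -- log x (n+1) = log c + log (1 + 1 / x n ∘ S.symm)
      have hg : Integrable (fun e => Real.log (1 + 1 / x n (S.symm e))) m := by
        refine Integrable.mono' (h1symm.sub hlogcsymm)
          ((measurable_const.add (((hxm n).comp hSsymm).const_div 1)).log.aestronglyMeasurable) ?_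
        filter_upwards with e
        exact log_one_add_div_le (hc (S.symm e)) (hxb n (S.symm e))
      have heq : (fun e => Real.log (x (n + 1) e)) =
          fun e => Real.log (c e) + Real.log (1 + 1 / x n (S.symm e)) := by
        funext e
        rw [hxs]
        have hpos : 0 < x n (S.symm e) := lt_of_lt_of_le (hc _) (hxb n _)
        have h2 : (0:ℝ) < 1 + 1 / x n (S.symm e) := by positivity
        rw [Real.log_mul (ne_of_gt (hc e)) (ne_of_gt h2)]
      rw [heq]
      exact hlogc.add hg
    · have hg : Integrable (fun e => Real.log (1 + 1 / x' n (S e))) m := by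
        refine Integrable.mono' (h1S.sub hlogcS)
          ((measurable_const.add (((hx'm n).comp hS.measurable).const_div 1)).log.aestronglyMeasurable) ?_
        filter_upwards with e
        exact log_one_add_div_le (hc (S e)) (hx'b n (S e))
      have heq : (fun e => Real.log (x' (n + 1) e)) =
          fun e => Real.log (c e) + Real.log (1 + 1 / x' n (S e)) := by
        funext e
        rw [hx's]
        have hpos : 0 < x' n (S e) := lt_of_lt_of_le (hc _) (hx'b n _)
        have h2 : (0:ℝ) < 1 + 1 / x' n (S e) := by positivity
        rw [Real.log_mul (ne_of_gt (hc e)) (ne_of_gt h2)]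
      rw [heq]
      exact hlogc.add hg
end

section
/- If log c is m-integrable, then for every integer n ≥ 0 one has ∫ log x[n] dm = ∫ log x'[n] dm. -/
open MeasureTheory

set_option linter.unusedSectionVars false
set_option linter.unusedVariables false
set_option linter.unreachableTactic false
set_option linter.unusedTactic false


noncomputable def Hc : List ℝ → ℝ
  | [] => 1
  | [a] => a + 1
  | a :: b :: l => a * Hc (b :: l) + b * Hc l

lemma Hc_pos : ∀ {l : List ℝ}, (∀ a ∈ l, 0 < a) → 0 < Hc l := by
  intro l
  induction l using Hc.induct with
  | case1 => intro _; norm_num [Hc]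
  | case2 a =>
    intro h
    have := h a (by simp)
    simp only [Hc]
    linarith
  | case3 a b l ih1 ih2 =>
    intro h
    have ha := h a (by simp)
    have hb := h b (by simp)
    have h1 := ih1 (fun x hx => h x (by simp [hx]))
    have h2 := ih2 (fun x hx => h x (by simp [hx]))
    simp only [Hc]
    positivity

lemma Hc_cons_cons (a b : ℝ) (l : List ℝ) :
    Hc (a :: b :: l) = a * Hc (b :: l) + b * Hc l := rfl

lemma Hc_append_two : ∀ (l : List ℝ) (a b : ℝ),
    Hc (l ++ [b, a]) = a * Hc (l ++ [b]) + b * Hc l := by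
  intro l
  induction l using Hc.induct with
  | case1 => intro a b; simp [Hc]; ring
  | case2 x => intro a b; simp [Hc]; ring
  | case3 x y l ih1 ih2 =>
    intro a b
    simp only [List.cons_append] at ih1 ih2 ⊢
    simp only [Hc_cons_cons]
    rw [ih1, ih2]; ring

lemma Hc_reverse : ∀ (l : List ℝ), Hc l.reverse = Hc l := by
  intro l
  induction l using Hc.induct with
  | case1 => rfl
  | case2 a => rfl
  | case3 a b l ih1 ih2 =>
    have : (a :: b :: l).reverse = l.reverse ++ [b, a] := by simp
    rw [this, Hc_append_two]
    have : l.reverse ++ [b] = (b :: l).reverse := by simp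
    rw [this, ih1, ih2, Hc]

lemma Hc_nil : Hc [] = 1 := rfl
lemma Hc_single (a : ℝ) : Hc [a] = a + 1 := rfl
lemma Hc_ge_prod : ∀ (l : List ℝ), (∀ a ∈ l, 0 < a) → l.prod ≤ Hc l := by
  intro l
  induction l using Hc.induct with
  | case1 => intro _; simp [Hc_nil]
  | case2 a => intro _; simp [Hc_single]
  | case3 a b l ih1 ih2 =>
    intro h
    have ha := h a (by simp)
    have hb := h b (by simp)
    have h1 := ih1 (fun x hx => h x (by simp [hx]))
    have h2 := ih2 (fun x hx => h x (by simp [hx]))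
    have hp2 : 0 < Hc l := Hc_pos (fun x hx => h x (by simp [hx]))
    rw [Hc_cons_cons, List.prod_cons]
    nlinarith [List.prod_pos (fun x hx => h x (List.mem_cons_of_mem _ hx))]

lemma Hc_le_prod : ∀ (l : List ℝ), (∀ a ∈ l, 0 < a) → Hc l ≤ (l.map (fun a => a + 1)).prod := by
  intro l
  induction l using Hc.induct with
  | case1 => intro _; simp [Hc_nil]
  | case2 a => intro _; simp [Hc_single]
  | case3 a b l ih1 ih2 =>
    intro h
    have ha := h a (by simp)
    have hb := h b (by simp)
    have h1 := ih1 (fun x hx => h x (by simp [hx]))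
    have h2 := ih2 (fun x hx => h x (by simp [hx]))
    have hp1 : 0 < Hc (b :: l) := Hc_pos (fun x hx => h x (by simp [hx]))
    have hp2 : 0 < Hc l := Hc_pos (fun x hx => h x (by simp [hx]))
    have hprodpos : 0 < (l.map (fun a => a + 1)).prod := by
      apply List.prod_pos
      intro x hx
      simp only [List.mem_map] at hx
      obtain ⟨y, hy, rfl⟩ := hx
      have := h y (by simp [hy]); linarith
    simp only [List.map_cons, List.prod_cons] at h1 ⊢
    rw [Hc_cons_cons]
    nlinarith [mul_le_mul_of_nonneg_left h1 ha.le, mul_le_mul_of_nonneg_left h2 hb.le,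
      mul_pos ha hprodpos, mul_pos hb hprodpos]

lemma sum_map_neg (l : List ℝ) (f : ℝ → ℝ) : -(l.map f).sum = (l.map (fun a => -(f a))).sum := by
  induction l with
  | nil => simp
  | cons a t ih => simp only [List.map_cons, List.sum_cons, ← ih]; ring

lemma log_list_prod : ∀ (l : List ℝ), (∀ a ∈ l, 0 < a) →
    Real.log l.prod = (l.map Real.log).sum := by
  intro l
  induction l with
  | nil => simp
  | cons a t ih =>
    intro h
    have ha := h a (by simp)
    have hp : 0 < t.prod := List.prod_pos (fun x hx => h x (by simp [hx]))
    rw [List.prod_cons, Real.log_mul (ne_of_gt ha) (ne_of_gt hp), List.map_cons,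
      List.sum_cons, ih (fun x hx => h x (by simp [hx]))]

lemma log_add_one_le (a : ℝ) (ha : 0 < a) : Real.log (a + 1) ≤ Real.log 2 + |Real.log a| := by
  rcases le_total a 1 with h | h
  · have : Real.log (a + 1) ≤ Real.log 2 := Real.log_le_log (by linarith) (by linarith)
    have := abs_nonneg (Real.log a)
    linarith
  · have h1 : Real.log (a + 1) ≤ Real.log (2 * a) := Real.log_le_log (by linarith) (by linarith)
    rw [Real.log_mul (by norm_num) (ne_of_gt ha)] at h1
    have h2 : 0 ≤ Real.log a := Real.log_nonneg h
    rw [abs_of_nonneg h2]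
    linarith

lemma abs_log_Hc_le : ∀ (l : List ℝ), (∀ a ∈ l, 0 < a) →
    |Real.log (Hc l)| ≤ (l.map (fun a => Real.log 2 + 2 * |Real.log a|)).sum := by
  intro l h
  have hpos := Hc_pos h
  have hub : Real.log (Hc l) ≤ (l.map (fun a => Real.log 2 + 2 * |Real.log a|)).sum := by
    calc Real.log (Hc l) ≤ Real.log ((l.map (fun a => a + 1)).prod) := by
          apply Real.log_le_log hpos (Hc_le_prod l h)
      _ = ((l.map (fun a => a + 1)).map Real.log).sum := by
          apply log_list_prod
          intro x hx
          simp only [List.mem_map] at hx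
          obtain ⟨y, hy, rfl⟩ := hx
          have := h y hy; linarith
      _ ≤ (l.map (fun a => Real.log 2 + 2 * |Real.log a|)).sum := by
          rw [List.map_map]
          apply List.sum_le_sum
          intro a ha
          have h0 := h a ha
          have := log_add_one_le a h0
          have := abs_nonneg (Real.log a)
          simp only [Function.comp]
          linarith
  have hlb : -(l.map (fun a => Real.log 2 + 2 * |Real.log a|)).sum ≤ Real.log (Hc l) := by
    have hplb : Real.log l.prod ≤ Real.log (Hc l) :=
      Real.log_le_log (List.prod_pos h) (Hc_ge_prod l h)
    rw [log_list_prod l h] at hplb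
    have : -(l.map (fun a => Real.log 2 + 2 * |Real.log a|)).sum ≤ (l.map Real.log).sum := by
      rw [neg_le]
      calc -(l.map Real.log).sum = (l.map (fun a => -Real.log a)).sum := sum_map_neg l Real.log
        _ ≤ (l.map (fun a => Real.log 2 + 2 * |Real.log a|)).sum := by
            apply List.sum_le_sum
            intro a ha
            have h2 : 0 < (2:ℝ) := by norm_num
            have := neg_abs_le (Real.log a)
            have := abs_nonneg (Real.log a)
            have := Real.log_nonneg (by norm_num : (1:ℝ) ≤ 2)
            linarith [neg_le_abs (Real.log a)]
    linarith
  rw [abs_le]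
  exact ⟨hlb, hub⟩

def dnl {E : Type*} (c : E → ℝ) (T : E → E) : ℕ → E → List ℝ
  | 0, e => [c e]
  | n + 1, e => c e :: dnl c T n (T e)

lemma dnl_zero {E : Type*} (c : E → ℝ) (T : E → E) (e : E) : dnl c T 0 e = [c e] := rfl
lemma dnl_succ {E : Type*} (c : E → ℝ) (T : E → E) (n : ℕ) (e : E) :
    dnl c T (n + 1) e = c e :: dnl c T n (T e) := rfl

lemma dnl_mem_pos {E : Type*} {c : E → ℝ} (hc : ∀ e, 0 < c e) (T : E → E) :
    ∀ (n : ℕ) (e : E), ∀ a ∈ dnl c T n e, 0 < a := by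
  intro n
  induction n with
  | zero => intro e a ha; simp [dnl_zero] at ha; subst ha; exact hc e
  | succ n ih =>
    intro e a ha
    rw [dnl_succ] at ha
    rcases List.mem_cons.mp ha with h | h
    · subst h; exact hc e
    · exact ih (T e) a h

lemma dnl_snoc {E : Type*} (c : E → ℝ) (T : E → E) :
    ∀ (n : ℕ) (e : E), dnl c T (n + 1) e = dnl c T n e ++ [c (T^[n + 1] e)] := by
  intro n
  induction n with
  | zero => intro e; simp [dnl_zero, dnl_succ]
  | succ n ih =>
    intro e
    rw [dnl_succ, ih (T e), dnl_succ, List.cons_append, Function.iterate_succ_apply T (n+1) e]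

lemma iterate_comp_symm {E : Type*} (S : E ≃ E) : ∀ (k : ℕ) (e : E),
    (⇑S)^[k] ((⇑S.symm)^[k] e) = e := by
  intro k
  induction k with
  | zero => intro e; rfl
  | succ k ih =>
    intro e
    rw [Function.iterate_succ_apply' (⇑S.symm), Function.iterate_succ_apply (⇑S)]
    rw [S.apply_symm_apply]
    exact ih e

lemma dnl_reverse {E : Type*} (c : E → ℝ) (S : E ≃ E) :
    ∀ (n : ℕ) (e : E), (dnl c ⇑S.symm n e).reverse = dnl c ⇑S n ((⇑S.symm)^[n] e) := by
  intro n
  induction n with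
  | zero => intro e; rfl
  | succ n ih =>
    intro e
    rw [dnl_succ, List.reverse_cons, ih (S.symm e), dnl_snoc,
      ← Function.iterate_succ_apply (⇑S.symm) n e, iterate_comp_symm S (n+1) e]

section Meas

variable {E : Type*} [MeasurableSpace E] {c : E → ℝ} {T : E → E}

lemma meas_Hfun (hcm : Measurable c) (hTm : Measurable T) :
    ∀ n : ℕ, Measurable fun e => Hc (dnl c T n e) := by
  have key : ∀ n : ℕ, Measurable (fun e => Hc (dnl c T n e)) ∧
      Measurable (fun e => Hc (dnl c T (n + 1) e)) := by
    intro n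
    induction n with
    | zero =>
      constructor
      · simp only [dnl_zero, Hc_single]
        exact hcm.add measurable_const
      · simp only [dnl_succ, dnl_zero, Hc_cons_cons, Hc_single, Hc_nil, mul_one]
        exact ((hcm.mul ((hcm.comp hTm).add measurable_const)).add (hcm.comp hTm))
    | succ n ih =>
      refine ⟨ih.2, ?_⟩
      have hrec : (fun e => Hc (dnl c T (n + 2) e)) =
          fun e => c e * Hc (dnl c T (n + 1) (T e)) + c (T e) * Hc (dnl c T n (T (T e))) := by
        funext e
        rw [dnl_succ, dnl_succ, Hc_cons_cons, ← dnl_succ]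
      rw [hrec]
      exact ((hcm.mul (ih.2.comp hTm)).add ((hcm.comp hTm).mul (ih.1.comp (hTm.comp hTm))))
  exact fun n => (key n).1

variable {m : Measure E} [IsFiniteMeasure m]

lemma int_bound (hc : ∀ e, 0 < c e) (hT : MeasurePreserving T m m) (hTe : MeasurableEmbedding T)
    (hlogc : Integrable (fun e => Real.log (c e)) m) :
    ∀ n : ℕ, Integrable
      (fun e => ((dnl c T n e).map (fun a => Real.log 2 + 2 * |Real.log a|)).sum) m := by
  have hbase : Integrable (fun e => Real.log 2 + 2 * |Real.log (c e)|) m := by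
    exact (integrable_const _).add ((hlogc.abs).const_mul 2)
  intro n
  induction n with
  | zero =>
    simp only [dnl_zero, List.map_cons, List.map_nil, List.sum_cons, List.sum_nil, add_zero]
    exact hbase
  | succ n ih =>
    simp only [dnl_succ, List.map_cons, List.sum_cons]
    exact hbase.add ((hT.integrable_comp_emb hTe).mpr ih)

lemma int_log_Hfun (hcm : Measurable c) (hc : ∀ e, 0 < c e) (hT : MeasurePreserving T m m) (hTe : MeasurableEmbedding T)
    (hlogc : Integrable (fun e => Real.log (c e)) m) (n : ℕ) :
    Integrable (fun e => Real.log (Hc (dnl c T n e))) m := by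
  refine (int_bound hc hT hTe hlogc n).mono
    ((meas_Hfun hcm hT.measurable n).log.aestronglyMeasurable) ?_
  refine Filter.Eventually.of_forall fun e => ?_
  have h1 := abs_log_Hc_le (dnl c T n e) (dnl_mem_pos hc T n e)
  have h2 : 0 ≤ ((dnl c T n e).map (fun a => Real.log 2 + 2 * |Real.log a|)).sum := by
    apply List.sum_nonneg
    intro x hx
    simp only [List.mem_map] at hx
    obtain ⟨y, _, rfl⟩ := hx
    have := abs_nonneg (Real.log y)
    have := Real.log_nonneg (by norm_num : (1:ℝ) ≤ 2)
    linarith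
  rw [Real.norm_eq_abs, Real.norm_eq_abs, abs_of_nonneg h2]
  exact h1

end Meas

noncomputable def qf {E : Type*} (c : E → ℝ) (T : E → E) : ℕ → E → ℝ
  | 0, e => c e
  | n + 1, e => c e * Hc (dnl c T n (T e))

section Qf

variable {E : Type*} {c : E → ℝ} {T : E → E}

lemma qf_pos (hc : ∀ e, 0 < c e) (n : ℕ) (e : E) : 0 < qf c T n e := by
  cases n with
  | zero => exact hc e
  | succ n => exact mul_pos (hc e) (Hc_pos (dnl_mem_pos hc T n (T e)))

lemma qf_rec (n : ℕ) (e : E) :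
    qf c T (n + 2) e = c e * (qf c T (n + 1) (T e) + qf c T n (T (T e))) := by
  cases n with
  | zero =>
    simp only [qf, dnl_succ, dnl_zero, Hc_cons_cons, Hc_single, Hc_nil]
    all_goals ring
  | succ n =>
    show c e * Hc (dnl c T (n + 2) (T e)) = _
    rw [dnl_succ, dnl_succ, Hc_cons_cons, ← dnl_succ]
    simp only [qf]
    all_goals ring

lemma x_eq (hc : ∀ e, 0 < c e) (x : ℕ → E → ℝ) (hx0 : ∀ e, x 0 e = c e)
    (hxs : ∀ n e, x (n + 1) e = c e * (1 + 1 / x n (T e))) :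
    ∀ (n : ℕ) (e : E), x (n + 1) e = qf c T (n + 1) e / qf c T n (T e) := by
  intro n
  induction n with
  | zero =>
    intro e
    rw [hxs, hx0]
    have h1 : c (T e) ≠ 0 := ne_of_gt (hc (T e))
    simp only [qf, dnl_zero, Hc_single]
    field_simp
    all_goals ring
  | succ n ih =>
    intro e
    rw [hxs, ih (T e), qf_rec]
    have h1 : 0 < qf c T (n + 1) (T e) := qf_pos hc _ _
    have h2 : 0 < qf c T n (T (T e)) := qf_pos hc _ _
    field_simp
    all_goals ring

end Qf

section Integral

variable {E : Type*} [MeasurableSpace E] {c : E → ℝ} {T : E → E} {m : Measure E} [IsFiniteMeasure m]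

noncomputable def Kf {E : Type*} [MeasurableSpace E] (m : Measure E) (c : E → ℝ)
    (T : E → E) : ℕ → ℝ
  | 0 => ∫ e, Real.log (c e) ∂m
  | n + 1 => (∫ e, Real.log (c e) ∂m) + ∫ e, Real.log (Hc (dnl c T n e)) ∂m

lemma log_qf_succ (hc : ∀ e, 0 < c e) (n : ℕ) (e : E) :
    Real.log (qf c T (n + 1) e) = Real.log (c e) + Real.log (Hc (dnl c T n (T e))) := by
  exact Real.log_mul (ne_of_gt (hc e)) (ne_of_gt (Hc_pos (dnl_mem_pos hc T n (T e))))

lemma int_log_qf (hcm : Measurable c) (hc : ∀ e, 0 < c e) (hT : MeasurePreserving T m m)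
    (hTe : MeasurableEmbedding T) (hlogc : Integrable (fun e => Real.log (c e)) m) (n : ℕ) :
    ∫ e, Real.log (qf c T n e) ∂m = Kf m c T n := by
  cases n with
  | zero => rfl
  | succ n =>
    have h1 : (fun e => Real.log (qf c T (n + 1) e)) =
        fun e => Real.log (c e) + Real.log (Hc (dnl c T n (T e))) := by
      funext e; exact log_qf_succ hc n e
    rw [h1]
    have hint : Integrable (fun e => Real.log (Hc (dnl c T n (T e)))) m :=
      (hT.integrable_comp_emb hTe).mpr (int_log_Hfun hcm hc hT hTe hlogc n)
    rw [integral_add hlogc hint]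
    show _ = (∫ e, Real.log (c e) ∂m) + ∫ e, Real.log (Hc (dnl c T n e)) ∂m
    congr 1
    exact hT.integral_comp hTe (fun e => Real.log (Hc (dnl c T n e)))

lemma integrable_log_qf (hcm : Measurable c) (hc : ∀ e, 0 < c e)
    (hT : MeasurePreserving T m m) (hTe : MeasurableEmbedding T)
    (hlogc : Integrable (fun e => Real.log (c e)) m) (n : ℕ) :
    Integrable (fun e => Real.log (qf c T n e)) m := by
  cases n with
  | zero => exact hlogc
  | succ n =>
    have h1 : (fun e => Real.log (qf c T (n + 1) e)) =
        fun e => Real.log (c e) + Real.log (Hc (dnl c T n (T e))) := by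
      funext e; exact log_qf_succ hc n e
    rw [h1]
    exact hlogc.add ((hT.integrable_comp_emb hTe).mpr (int_log_Hfun hcm hc hT hTe hlogc n))

lemma int_log_x_succ (hcm : Measurable c) (hc : ∀ e, 0 < c e) (hT : MeasurePreserving T m m)
    (hTe : MeasurableEmbedding T) (hlogc : Integrable (fun e => Real.log (c e)) m)
    (x : ℕ → E → ℝ) (hx0 : ∀ e, x 0 e = c e)
    (hxs : ∀ n e, x (n + 1) e = c e * (1 + 1 / x n (T e))) (n : ℕ) :
    ∫ e, Real.log (x (n + 1) e) ∂m = Kf m c T (n + 1) - Kf m c T n := by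
  have h1 : (fun e => Real.log (x (n + 1) e)) =
      fun e => Real.log (qf c T (n + 1) e) - Real.log (qf c T n (T e)) := by
    funext e
    rw [x_eq hc x hx0 hxs n e,
      Real.log_div (ne_of_gt (qf_pos hc _ _)) (ne_of_gt (qf_pos hc _ _))]
  have hint : Integrable (fun e => Real.log (qf c T n (T e))) m :=
    (hT.integrable_comp_emb hTe).mpr (integrable_log_qf hcm hc hT hTe hlogc n)
  rw [h1, integral_sub (integrable_log_qf hcm hc hT hTe hlogc (n + 1)) hint]
  rw [int_log_qf hcm hc hT hTe hlogc (n + 1)]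
  congr 1
  rw [← int_log_qf hcm hc hT hTe hlogc n]
  exact hT.integral_comp hTe (fun e => Real.log (qf c T n e))

lemma integral_comp_iterate (hT : MeasurePreserving T m m) (hTe : MeasurableEmbedding T)
    (g : E → ℝ) : ∀ k : ℕ, ∫ e, g (T^[k] e) ∂m = ∫ e, g e ∂m := by
  intro k
  induction k with
  | zero => rfl
  | succ k ih =>
    have h1 : ∀ e : E, g (T^[k + 1] e) = g (T^[k] (T e)) := by
      intro e; rw [Function.iterate_succ_apply]
    simp only [h1]
    rw [hT.integral_comp hTe (fun e => g (T^[k] e))]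
    exact ih

end Integral

theorem stmt_11 {E : Type*} [MeasurableSpace E] (m : Measure E)
    [IsProbabilityMeasure m]
    (S : E ≃ E) (hS : MeasurePreserving S m m) (hSsymm : Measurable ⇑S.symm)
    (c : E → ℝ) (hcm : Measurable c) (hc : ∀ e, 0 < c e)
    (x x' : ℕ → E → ℝ)
    (hx0 : ∀ e, x 0 e = c e)
    (hxs : ∀ n e, x (n + 1) e = c e * (1 + 1 / x n (S.symm e)))
    (hx'0 : ∀ e, x' 0 e = c e)
    (hx's : ∀ n e, x' (n + 1) e = c e * (1 + 1 / x' n (S e)))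
    (hlogc : Integrable (fun e => Real.log (c e)) m) :
    ∀ n : ℕ, ∫ e, Real.log (x n e) ∂m = ∫ e, Real.log (x' n e) ∂m := by
  have hSm : Measurable ⇑S := hS.measurable
  let ME : E ≃ᵐ E := ⟨S, hSm, hSsymm⟩
  have hMEcoe : ⇑ME = ⇑S := rfl
  have hMEsymmcoe : ⇑ME.symm = ⇑S.symm := rfl
  have hTe : MeasurableEmbedding ⇑S := hMEcoe ▸ ME.measurableEmbedding
  have hTe' : MeasurableEmbedding ⇑S.symm := hMEsymmcoe ▸ ME.symm.measurableEmbedding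
  have hT : MeasurePreserving ⇑S.symm m m := by
    have := (hMEcoe ▸ hS : MeasurePreserving ⇑ME m m).symm ME
    rwa [hMEsymmcoe] at this
  -- Kf equality
  have hK : ∀ n : ℕ, Kf m c ⇑S.symm n = Kf m c ⇑S n := by
    intro n
    cases n with
    | zero => rfl
    | succ n =>
      show (∫ e, Real.log (c e) ∂m) + ∫ e, Real.log (Hc (dnl c ⇑S.symm n e)) ∂m =
        (∫ e, Real.log (c e) ∂m) + ∫ e, Real.log (Hc (dnl c ⇑S n e)) ∂m
      congr 1
      have h1 : ∀ e, Hc (dnl c ⇑S.symm n e) = Hc (dnl c ⇑S n ((⇑S.symm)^[n] e)) := by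
        intro e; rw [← dnl_reverse c S n e, Hc_reverse]
      simp only [h1]
      exact integral_comp_iterate hT hTe' (fun e => Real.log (Hc (dnl c ⇑S n e))) n
  intro n
  cases n with
  | zero =>
    have h0 : ∀ e, Real.log (x 0 e) = Real.log (x' 0 e) := by
      intro e; rw [hx0, hx'0]
    simp only [h0]
  | succ n =>
    rw [int_log_x_succ hcm hc hT hTe' hlogc x hx0 hxs n,
      int_log_x_succ hcm hc hS hTe hlogc x' hx'0 hx's n, hK, hK]
end

section
/- Suppose f, f' : E → ℝ satisfy 0 ≤ f(e) ≤ u and 0 ≤ f'(e) ≤ u for all e, as well as the fixed-point equations f = a + b·f·(f∘S⁻¹) and f' = b + a·f'·(f'∘S). Define h := 1 − (f∘S⁻¹)·f'. Then the pointwise identity b·f·h = a·f'·(h∘S) holds on E. -/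
theorem stmt_13 {E : Type*} (S : E ≃ E) (p : E → ℝ)
    (hp0 : ∀ e, 0 < p e) (hp1 : ∀ e, p e < 1)
    (u : ℝ) (hu0 : 0 < u) (hu1 : u < 1)
    (f f' : E → ℝ)
    (hfb : ∀ e, 0 ≤ f e ∧ f e ≤ u) (hf'b : ∀ e, 0 ≤ f' e ∧ f' e ≤ u)
    (hf : ∀ e, f e = u * p e + u * (1 - p e) * f e * f (S.symm e))
    (hf' : ∀ e, f' e = u * (1 - p e) + u * p e * f' e * f' (S e))
    (h : E → ℝ) (hh : ∀ e, h e = 1 - f (S.symm e) * f' e) :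
    ∀ e, u * (1 - p e) * f e * h e = u * p e * f' e * h (S e) := by
  intro e
  have h1 := hh e
  have h2 := hh (S e)
  rw [S.symm_apply_apply] at h2
  rw [h1, h2]
  linear_combination f' e * hf e - f e * hf' e
end

section
/- Suppose f, f' : E → ℝ are measurable, satisfy 0 ≤ f(e) ≤ u and 0 ≤ f'(e) ≤ u for all e, and satisfy the fixed-point equations f = a + b·f·(f∘S⁻¹) and f' = b + a·f'·(f'∘S). If log p and log q are m-integrable, then log f and log f' are m-integrable and ∫ log f dm = ∫ log f' dm + ∫ log(p/q) dm. -/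
open MeasureTheory

theorem stmt_14 {E : Type*} [MeasurableSpace E] (m : Measure E)
    [IsProbabilityMeasure m]
    (S : E ≃ E) (hS : MeasurePreserving S m m) (hSsymm : Measurable ⇑S.symm)
    (p : E → ℝ) (hpm : Measurable p)
    (hp0 : ∀ e, 0 < p e) (hp1 : ∀ e, p e < 1)
    (u : ℝ) (hu0 : 0 < u) (hu1 : u < 1)
    (f f' : E → ℝ) (hfm : Measurable f) (hf'm : Measurable f')
    (hfb : ∀ e, 0 ≤ f e ∧ f e ≤ u) (hf'b : ∀ e, 0 ≤ f' e ∧ f' e ≤ u)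
    (hf : ∀ e, f e = u * p e + u * (1 - p e) * f e * f (S.symm e))
    (hf' : ∀ e, f' e = u * (1 - p e) + u * p e * f' e * f' (S e))
    (hlogp : Integrable (fun e => Real.log (p e)) m)
    (hlogq : Integrable (fun e => Real.log (1 - p e)) m) :
    Integrable (fun e => Real.log (f e)) m ∧
      Integrable (fun e => Real.log (f' e)) m ∧
      ∫ e, Real.log (f e) ∂m =
        ∫ e, Real.log (f' e) ∂m + ∫ e, Real.log (p e / (1 - p e)) ∂m := by
  have hq0 : ∀ e, 0 < 1 - p e := fun e => by linarith [hp1 e]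
  -- lower bounds for f and f'
  have hfa : ∀ e, u * p e ≤ f e := by
    intro e
    have h0 : 0 ≤ u * (1 - p e) * f e * f (S.symm e) :=
      mul_nonneg (mul_nonneg (mul_nonneg hu0.le (hq0 e).le) (hfb e).1) (hfb (S.symm e)).1
    linarith [hf e]
  have hf'a : ∀ e, u * (1 - p e) ≤ f' e := by
    intro e
    have h0 : 0 ≤ u * p e * f' e * f' (S e) :=
      mul_nonneg (mul_nonneg (mul_nonneg hu0.le (hp0 e).le) (hf'b e).1) (hf'b (S e)).1
    linarith [hf' e]
  have hfpos : ∀ e, 0 < f e := fun e => lt_of_lt_of_le (mul_pos hu0 (hp0 e)) (hfa e)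
  have hf'pos : ∀ e, 0 < f' e := fun e => lt_of_lt_of_le (mul_pos hu0 (hq0 e)) (hf'a e)
  -- the auxiliary function V
  set V : E → ℝ := fun e => 1 - f (S.symm e) * f' e with hVdef
  have hVm : Measurable V := measurable_const.sub ((hfm.comp hSsymm).mul hf'm)
  have huu : 0 < 1 - u * u := by nlinarith
  have hVlb : ∀ e, 1 - u * u ≤ V e := by
    intro e
    have : f (S.symm e) * f' e ≤ u * u :=
      mul_le_mul (hfb (S.symm e)).2 (hf'b e).2 (hf'b e).1 hu0.le
    simp only [hVdef]; linarith
  have hVpos : ∀ e, 0 < V e := fun e => lt_of_lt_of_le huu (hVlb e)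
  have hVle : ∀ e, V e ≤ 1 := by
    intro e
    have : 0 ≤ f (S.symm e) * f' e := mul_nonneg (hfb (S.symm e)).1 (hf'b e).1
    simp only [hVdef]; linarith
  -- the key pointwise identity
  have key : ∀ e, u * (1 - p e) * f e * V e = u * p e * f' e * V (S e) := by
    intro e
    simp only [hVdef, S.symm_apply_apply]
    linear_combination (f' e) * hf e - (f e) * hf' e
  -- logarithmic form of the key identity
  have logkey : ∀ e, Real.log (f e) =
      Real.log (p e / (1 - p e)) + Real.log (f' e) + Real.log (V (S e)) - Real.log (V e) := by
    intro e
    have h := congrArg Real.log (key e)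
    rw [Real.log_mul (mul_pos (mul_pos hu0 (hq0 e)) (hfpos e)).ne' (hVpos e).ne',
        Real.log_mul (mul_pos hu0 (hq0 e)).ne' (hfpos e).ne',
        Real.log_mul hu0.ne' (hq0 e).ne',
        Real.log_mul (mul_pos (mul_pos hu0 (hp0 e)) (hf'pos e)).ne' (hVpos (S e)).ne',
        Real.log_mul (mul_pos hu0 (hp0 e)).ne' (hf'pos e).ne',
        Real.log_mul hu0.ne' (hp0 e).ne'] at h
    rw [Real.log_div (hp0 e).ne' (hq0 e).ne']
    linarith
  -- integrability of log f
  have hIf : Integrable (fun e => Real.log (f e)) m := by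
    apply Integrable.mono' ((integrable_const (|Real.log u|)).add hlogp.abs)
      (Real.measurable_log.comp hfm).aestronglyMeasurable
    filter_upwards with e
    simp only [Function.comp_apply, Pi.add_apply]
    have h1 : Real.log (u * p e) ≤ Real.log (f e) :=
      Real.log_le_log (mul_pos hu0 (hp0 e)) (hfa e)
    rw [Real.log_mul hu0.ne' (hp0 e).ne'] at h1
    have h2 : Real.log (f e) ≤ Real.log u := Real.log_le_log (hfpos e) (hfb e).2
    have h3 : Real.log u ≤ 0 := Real.log_nonpos hu0.le hu1.le
    have h4 : Real.log (p e) ≤ 0 := Real.log_nonpos (hp0 e).le (hp1 e).le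
    rw [Real.norm_eq_abs, abs_of_nonpos (by linarith), abs_of_nonpos h3, abs_of_nonpos h4]
    linarith
  -- integrability of log f'
  have hIf' : Integrable (fun e => Real.log (f' e)) m := by
    apply Integrable.mono' ((integrable_const (|Real.log u|)).add hlogq.abs)
      (Real.measurable_log.comp hf'm).aestronglyMeasurable
    filter_upwards with e
    simp only [Function.comp_apply, Pi.add_apply]
    have h1 : Real.log (u * (1 - p e)) ≤ Real.log (f' e) :=
      Real.log_le_log (mul_pos hu0 (hq0 e)) (hf'a e)
    rw [Real.log_mul hu0.ne' (hq0 e).ne'] at h1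
    have h2 : Real.log (f' e) ≤ Real.log u := Real.log_le_log (hf'pos e) (hf'b e).2
    have h3 : Real.log u ≤ 0 := Real.log_nonpos hu0.le hu1.le
    have h4 : Real.log (1 - p e) ≤ 0 := Real.log_nonpos (hq0 e).le (by linarith [hp0 e])
    rw [Real.norm_eq_abs, abs_of_nonpos (by linarith), abs_of_nonpos h3, abs_of_nonpos h4]
    linarith
  -- integrability of log V and log V ∘ S
  have hIV : Integrable (fun e => Real.log (V e)) m := by
    apply Integrable.mono' (integrable_const (|Real.log (1 - u * u)|))
      (Real.measurable_log.comp hVm).aestronglyMeasurable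
    filter_upwards with e
    simp only [Function.comp_apply]
    have h1 : Real.log (1 - u * u) ≤ Real.log (V e) := Real.log_le_log huu (hVlb e)
    have h2 : Real.log (V e) ≤ 0 := Real.log_nonpos (hVpos e).le (hVle e)
    have h3 := neg_abs_le (Real.log (1 - u * u))
    rw [Real.norm_eq_abs, abs_le]
    constructor <;> [linarith; linarith [abs_nonneg (Real.log (1 - u * u))]]
  have Sme : MeasurableEmbedding (⇑S) :=
    (MeasurableEquiv.mk S hS.measurable hSsymm).measurableEmbedding
  have hIVS : Integrable (fun e => Real.log (V (S e))) m :=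
    (hS.integrable_comp_emb Sme).2 hIV
  -- integrability of log (p/(1-p))
  have hIpq : Integrable (fun e => Real.log (p e / (1 - p e))) m := by
    have heq : (fun e => Real.log (p e / (1 - p e)))
        = fun e => Real.log (p e) - Real.log (1 - p e) :=
      funext fun e => Real.log_div (hp0 e).ne' (hq0 e).ne'
    rw [heq]; exact hlogp.sub hlogq
  refine ⟨hIf, hIf', ?_⟩
  -- ∫ log V ∘ S = ∫ log V
  have hVeq : ∫ e, Real.log (V (S e)) ∂m = ∫ e, Real.log (V e) ∂m :=
    hS.integral_comp Sme (fun e => Real.log (V e))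
  have hstep : ∫ e, Real.log (f e) ∂m
      = ∫ e, (Real.log (p e / (1 - p e)) + Real.log (f' e)
          + Real.log (V (S e)) - Real.log (V e)) ∂m :=
    integral_congr_ae (Filter.Eventually.of_forall logkey)
  have hab2 : Integrable (fun e => Real.log (p e / (1 - p e)) + Real.log (f' e)) m :=
    hIpq.add hIf'
  have hab : Integrable
      (fun e => Real.log (p e / (1 - p e)) + Real.log (f' e) + Real.log (V (S e))) m :=
    hab2.add hIVS
  rw [hstep, integral_sub hab hIV, integral_add hab2 hIVS, integral_add hIpq hIf', hVeq]
  ring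
end

section
/- Suppose x, x' : E → ℝ satisfy x(e) > 0 and x'(e) > 0 for all e and the fixed-point equations x = c·(1 + 1/(x∘S⁻¹)) and x' = c·(1 + 1/(x'∘S)). Define y := c + x·x'. Then the pointwise identity (c∘S)·(x'∘S)·y = c·x·(y∘S) holds on E. -/
theorem stmt_15 {E : Type*} (S : E ≃ E) (c : E → ℝ) (hc : ∀ e, 0 < c e)
    (x x' : E → ℝ) (hx : ∀ e, 0 < x e) (hx' : ∀ e, 0 < x' e)
    (hxe : ∀ e, x e = c e * (1 + 1 / x (S.symm e)))
    (hx'e : ∀ e, x' e = c e * (1 + 1 / x' (S e)))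
    (y : E → ℝ) (hy : ∀ e, y e = c e + x e * x' e) :
    ∀ e, c (S e) * x' (S e) * y e = c e * x e * y (S e) := by
  intro e
  have h1 := hxe (S e)
  rw [Equiv.symm_apply_apply] at h1
  have h2 := hx'e e
  have hxne : x e ≠ 0 := (hx e).ne'
  have hx'ne : x' (S e) ≠ 0 := (hx' (S e)).ne'
  rw [hy e, hy (S e), h1, h2]
  field_simp
  ring
end

section
/- Suppose x, x' : E → ℝ are measurable, satisfy x(e) > 0 and x'(e) > 0 for all e, and satisfy the fixed-point equations x = c·(1 + 1/(x∘S⁻¹)) and x' = c·(1 + 1/(x'∘S)). If log c is m-integrable, then log x, log x' and log(c + x·x') are m-integrable and ∫ log x dm = ∫ log x' dm. -/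
open MeasureTheory

lemma aux_log_one_add_inv {t : ℝ} (ht : 0 < t) :
    Real.log (1 + 1/t) ≤ Real.log 2 + |Real.log t| := by
  rcases le_or_gt 1 t with h | h
  · have h1 : 1 + 1/t ≤ 2 := by
      have : 1/t ≤ 1 := by rw [div_le_one ht]; exact h
      linarith
    have h2 : Real.log (1 + 1/t) ≤ Real.log 2 := by
      have : (0:ℝ) < 1 + 1/t := by positivity
      gcongr
    have := abs_nonneg (Real.log t)
    linarith
  · have h1 : 1 + 1/t ≤ 2/t := by
      have : (1:ℝ) ≤ 1/t := by rw [le_div_iff₀ ht]; linarith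
      have : 1 + 1/t ≤ 1/t + 1/t := by linarith
      calc 1 + 1/t ≤ 1/t + 1/t := this
        _ = 2/t := by ring
    have h2 : Real.log (1 + 1/t) ≤ Real.log (2/t) := by
      have : (0:ℝ) < 1 + 1/t := by positivity
      gcongr
    rw [Real.log_div (by norm_num) (ne_of_gt ht)] at h2
    have h3 : Real.log t < 0 := Real.log_neg ht h
    rw [abs_of_nonpos h3.le]
    linarith

lemma aux_logbound {cc cc' u X : ℝ} (hcc : 0 < cc) (hcc' : 0 < cc')
    (hu : cc' < u) (hX : X = cc * (1 + 1/u)) :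
    |Real.log X| ≤ |Real.log cc| + (Real.log 2 + |Real.log cc'|) := by
  have hu0 : 0 < u := hcc'.trans hu
  have h1 : (0:ℝ) < 1 + 1/u := by positivity
  have hlog : Real.log X = Real.log cc + Real.log (1 + 1/u) := by
    rw [hX, Real.log_mul (ne_of_gt hcc) (ne_of_gt h1)]
  have h2 : 0 ≤ Real.log (1 + 1/u) := Real.log_nonneg (by nlinarith [one_div_pos.mpr hu0])
  have h3 : Real.log (1 + 1/u) ≤ Real.log (1 + 1/cc') := by
    have h5 : 1/u ≤ 1/cc' := one_div_le_one_div_of_le hcc' hu.le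
    have h6 : 1 + 1/u ≤ 1 + 1/cc' := by linarith
    gcongr
  have h4 := aux_log_one_add_inv hcc'
  calc |Real.log X| ≤ |Real.log cc| + |Real.log (1 + 1/u)| := by
        rw [hlog]; exact abs_add_le _ _
    _ ≤ _ := by rw [abs_of_nonneg h2]; linarith

lemma aux_log_add {a b : ℝ} (ha : 0 < a) (hb : 0 < b) :
    |Real.log (a + b)| ≤ Real.log 2 + |Real.log a| + |Real.log b| := by
  have hab : 0 < a + b := by linarith
  have hl2 : 0 ≤ Real.log 2 := Real.log_nonneg (by norm_num)
  rw [abs_le]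
  constructor
  · have h1 : Real.log a ≤ Real.log (a+b) := by gcongr; linarith
    have h2 := neg_abs_le (Real.log a)
    have := abs_nonneg (Real.log b)
    linarith
  · rcases le_total a b with h | h
    · have h2 : Real.log (a+b) ≤ Real.log (2*b) := by gcongr; linarith
      rw [Real.log_mul two_ne_zero (ne_of_gt hb)] at h2
      have := le_abs_self (Real.log b); have := abs_nonneg (Real.log a)
      linarith
    · have h2 : Real.log (a+b) ≤ Real.log (2*a) := by gcongr; linarith
      rw [Real.log_mul two_ne_zero (ne_of_gt ha)] at h2
      have := le_abs_self (Real.log a); have := abs_nonneg (Real.log b)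
      linarith

theorem stmt_16 {E : Type*} [MeasurableSpace E] (m : Measure E)
    [IsProbabilityMeasure m]
    (S : E ≃ E) (hS : MeasurePreserving S m m) (hSsymm : Measurable ⇑S.symm)
    (c : E → ℝ) (hcm : Measurable c) (hc : ∀ e, 0 < c e)
    (x x' : E → ℝ) (hxm : Measurable x) (hx'm : Measurable x')
    (hx : ∀ e, 0 < x e) (hx' : ∀ e, 0 < x' e)
    (hxe : ∀ e, x e = c e * (1 + 1 / x (S.symm e)))
    (hx'e : ∀ e, x' e = c e * (1 + 1 / x' (S e)))
    (hlogc : Integrable (fun e => Real.log (c e)) m) :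
    Integrable (fun e => Real.log (x e)) m ∧
      Integrable (fun e => Real.log (x' e)) m ∧
      Integrable (fun e => Real.log (c e + x e * x' e)) m ∧
      ∫ e, Real.log (x e) ∂m = ∫ e, Real.log (x' e) ∂m := by
  have hSm : Measurable (S : E → E) := hS.measurable
  let MS : E ≃ᵐ E := ⟨S, hSm, hSsymm⟩
  have hemb : MeasurableEmbedding (S : E → E) := MS.measurableEmbedding
  have hmapsymm : MeasurePreserving (S.symm : E → E) m m := by
    refine ⟨hSsymm, ?_⟩
    calc Measure.map S.symm m = Measure.map S.symm (Measure.map S m) := by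
          rw [hS.map_eq]
      _ = Measure.map (⇑S.symm ∘ ⇑S) m := Measure.map_map hSsymm hSm
      _ = m := by rw [S.symm_comp_self, Measure.map_id]
  -- basic positivity / bounds
  have hcx : ∀ e, c e < x e := by
    intro e
    rw [hxe e]
    have h1 : 0 < 1 / x (S.symm e) := one_div_pos.mpr (hx (S.symm e))
    nlinarith [hc e]
  have hcx' : ∀ e, c e < x' e := by
    intro e
    rw [hx'e e]
    have h1 : 0 < 1 / x' (S e) := one_div_pos.mpr (hx' (S e))
    nlinarith [hc e]
  have hbx : ∀ e, |Real.log (x e)| ≤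
      |Real.log (c e)| + (Real.log 2 + |Real.log (c (S.symm e))|) := fun e =>
    aux_logbound (hc e) (hc (S.symm e)) (hcx (S.symm e)) (hxe e)
  have hbx' : ∀ e, |Real.log (x' e)| ≤
      |Real.log (c e)| + (Real.log 2 + |Real.log (c (S e))|) := fun e =>
    aux_logbound (hc e) (hc (S e)) (hcx' (S e)) (hx'e e)
  -- integrability of bounds
  have habsc : Integrable (fun e => |Real.log (c e)|) m := hlogc.abs
  have habscS : Integrable (fun e => |Real.log (c (S e))|) m :=
    (hS.integrable_comp habsc.aestronglyMeasurable).mpr habsc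
  have habscSsymm : Integrable (fun e => |Real.log (c (S.symm e))|) m :=
    (hmapsymm.integrable_comp habsc.aestronglyMeasurable).mpr habsc
  have hlogx : Integrable (fun e => Real.log (x e)) m := by
    refine Integrable.mono' (habsc.add ((integrable_const (Real.log 2)).add habscSsymm))
      ((Real.measurable_log.comp hxm).aestronglyMeasurable)
      (ae_of_all _ fun e => ?_)
    rw [Real.norm_eq_abs]; exact hbx e
  have hlogx' : Integrable (fun e => Real.log (x' e)) m := by
    refine Integrable.mono' (habsc.add ((integrable_const (Real.log 2)).add habscS))
      ((Real.measurable_log.comp hx'm).aestronglyMeasurable)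
      (ae_of_all _ fun e => ?_)
    rw [Real.norm_eq_abs]; exact hbx' e
  -- integrability of F = log (c + x x')
  have hbF : ∀ e, |Real.log (c e + x e * x' e)| ≤
      Real.log 2 + |Real.log (c e)| + (|Real.log (x e)| + |Real.log (x' e)|) := by
    intro e
    have h := aux_log_add (hc e) (mul_pos (hx e) (hx' e))
    rw [Real.log_mul (ne_of_gt (hx e)) (ne_of_gt (hx' e))] at h
    have h2 := abs_add_le (Real.log (x e)) (Real.log (x' e))
    linarith
  have hFint : Integrable (fun e => Real.log (c e + x e * x' e)) m := by
    refine Integrable.mono'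
      (((integrable_const (Real.log 2)).add habsc).add (hlogx.abs.add hlogx'.abs))
      ((Real.measurable_log.comp (hcm.add (hxm.mul hx'm))).aestronglyMeasurable)
      (ae_of_all _ fun e => ?_)
    simp only [Pi.add_apply]
    rw [Real.norm_eq_abs]
    have := hbF e
    linarith
  set F : E → ℝ := fun e => Real.log (c e + x e * x' e) with hF
  -- key pointwise identity
  have hkey : ∀ e, Real.log (x e) =
      Real.log (c (S e)) + Real.log (x' (S e)) - Real.log (c e) - F (S e) + F e := by
    intro e
    have hxe0 := hx e
    have hx'Se := hx' (S e)
    have hxSe := hx (S e)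
    have hx'e0 := hx' e
    have hcSe := hc (S e)
    have hce := hc e
    set A : ℝ := x e + (x e + 1) * x' (S e) with hA
    have hApos : 0 < A := by nlinarith
    have h1 : c (S e) + x (S e) * x' (S e) = c (S e) * A / x e := by
      rw [hxe (S e), Equiv.symm_apply_apply, hA]
      field_simp
    have h2 : c e + x e * x' e = c e * A / x' (S e) := by
      rw [hx'e e, hA]
      field_simp
      ring
    have e1 : F (S e) = Real.log (c (S e)) + Real.log A - Real.log (x e) := by
      show Real.log (c (S e) + x (S e) * x' (S e)) = _
      rw [h1, Real.log_div (by positivity) (ne_of_gt hxe0),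
        Real.log_mul (ne_of_gt hcSe) (ne_of_gt hApos)]
    have e2 : F e = Real.log (c e) + Real.log A - Real.log (x' (S e)) := by
      show Real.log (c e + x e * x' e) = _
      rw [h2, Real.log_div (by positivity) (ne_of_gt hx'Se),
        Real.log_mul (ne_of_gt hce) (ne_of_gt hApos)]
    linarith [e1, e2]
  -- composed integrabilities
  have hlogcS : Integrable (fun e => Real.log (c (S e))) m :=
    (hS.integrable_comp hlogc.aestronglyMeasurable).mpr hlogc
  have hlogx'S : Integrable (fun e => Real.log (x' (S e))) m :=
    (hS.integrable_comp hlogx'.aestronglyMeasurable).mpr hlogx'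
  have hFS : Integrable (fun e => F (S e)) m :=
    (hS.integrable_comp hFint.aestronglyMeasurable).mpr hFint
  refine ⟨hlogx, hlogx', hFint, ?_⟩
  have i1 : ∫ e, Real.log (c (S e)) ∂m = ∫ e, Real.log (c e) ∂m :=
    hS.integral_comp hemb (fun e => Real.log (c e))
  have i2 : ∫ e, Real.log (x' (S e)) ∂m = ∫ e, Real.log (x' e) ∂m :=
    hS.integral_comp hemb (fun e => Real.log (x' e))
  have i3 : ∫ e, F (S e) ∂m = ∫ e, F e ∂m :=
    hS.integral_comp hemb F
  calc ∫ e, Real.log (x e) ∂m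
      = ∫ e, (Real.log (c (S e)) + Real.log (x' (S e)) - Real.log (c e)
          - F (S e) + F e) ∂m := by
        exact integral_congr_ae (ae_of_all _ hkey)
    _ = ∫ e, Real.log (c (S e)) ∂m + ∫ e, Real.log (x' (S e)) ∂m
          - ∫ e, Real.log (c e) ∂m - ∫ e, F (S e) ∂m + ∫ e, F e ∂m := by
        have I3 : Integrable (fun e => Real.log (c (S e)) + Real.log (x' (S e))
            - Real.log (c e)) m := (hlogcS.add hlogx'S).sub hlogc
        have I4 : Integrable (fun e => Real.log (c (S e)) + Real.log (x' (S e))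
            - Real.log (c e) - F (S e)) m := I3.sub hFS
        have I2 : Integrable (fun e => Real.log (c (S e)) + Real.log (x' (S e))) m :=
          hlogcS.add hlogx'S
        rw [integral_add I4 hFint, integral_sub I3 hFS,
          integral_sub I2 hlogc, integral_add hlogcS hlogx'S]
    _ = ∫ e, Real.log (x' e) ∂m := by
        rw [i1, i2, i3]; ring
end
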